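/- arXiv:2404.07971 — 8 statements merged into one kernel-verified Lean document; each statement's English description precedes it below -/
import Mathlib

section
/- Let $M \in \mathbb{N}$, $A > 0$, and let $(E_k)_{k \ge 1}$ be a sequence of nonempty closed sets $E_k \subseteq [-A, A]$ that is $M$-periodic, i.e., $E_{k+M} = E_k$ for all $k \ge 1$. Suppose that $\sum_{k=1}^M \max E_k \le 0$ or $\sum_{k=1}^M \min E_k \ge 0$. Then for every $n \in \mathbb{N}$ and every choice of $\varepsilon_k \in E_k$, the polynomial $P_n(x) = 1 + \sum_{k=1}^n \varepsilon_k x^k$ has at most $3M$ distinct roots in $[0,1]$. -/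
/-!
Multiply `P_n` by `1 + x + ⋯ + x ^ (M - 1)`. For `M ≤ k ≤ n` the `k`-th coefficient of the product
is `ε_{k-M+1} + ⋯ + ε_k`, a sum over one full period, so by periodicity it lies between
`∑ min E_k` and `∑ max E_k`; the hypothesis therefore gives all these coefficients one sign. Only
the `M` coefficients below `M` and the `M - 1` coefficients above `n` can then contribute sign
changes, so by Descartes' rule of signs the product has at most `2M` positive roots, while
`P_n(0) = 1`.
-/

open Polynomial Finset

theorem Finset.sum_range_sub_eq_sum_Icc_of_periodic {β : Type*} [AddCommMonoid β] {f : ℕ → β}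
    {M : ℕ} (hf : ∀ k, 1 ≤ k → f (k + M) = f k) {k : ℕ} (hk : M ≤ k) :
    ∑ i ∈ range M, f (k - i) = ∑ j ∈ Icc 1 M, f j := by
  induction k, hk using Nat.le_induction with
  | base =>
    refine sum_nbij' (M - ·) (M - ·) ?_ ?_ ?_ ?_ fun _ _ => rfl <;>
      intro i hi <;> simp only [mem_range, mem_Icc] at hi ⊢ <;> omega
  | succ k hMk ih =>
    cases M with
    | zero => simp
    | succ m =>
      rw [sum_range_succ', ← ih, sum_range_succ, Nat.sub_zero]
      congr 1
      · exact sum_congr rfl fun i _ => by rw [Nat.add_sub_add_right]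
      · rw [← hf (k - m) (by omega)]
        congr 1
        omega

namespace Polynomial

section SignVariations

variable {R : Type*} [Semiring R] [LinearOrder R]

theorem signVariations_le_natDegree (P : R[X]) : signVariations P ≤ P.natDegree := by
  by_cases hP : P = 0
  · simp [hP]
  have ih := signVariations_le_natDegree P.eraseLead
  have hdeg := eraseLead_natDegree_le P
  rw [signVariations_eq_eraseLead_add_ite hP]
  split_ifs with hsign
  · have he : P.eraseLead ≠ 0 := by
      rintro he
      simp [he, hP] at hsign
    have := natDegree_pos_of_eraseLead_ne_zero he
    omega
  · omega
termination_by P.support.card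
decreasing_by exact eraseLead_support_card_lt hP

theorem signVariations_le_of_coeff_nonneg {P : R[X]} {a b : ℕ}
    (h : ∀ k, a ≤ k → k < b → 0 ≤ P.coeff k) :
    signVariations P ≤ a + (P.natDegree + 1 - b) := by
  by_cases hP : P = 0
  · simp [hP]
  have he_coeff : ∀ k, a ≤ k → k < b → 0 ≤ P.eraseLead.coeff k := fun k hak hkb => by
    rw [eraseLead_coeff]
    split_ifs
    exacts [le_rfl, h k hak hkb]
  have ih := signVariations_le_of_coeff_nonneg he_coeff
  have hdeg := eraseLead_natDegree_le P
  rw [signVariations_eq_eraseLead_add_ite hP]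
  split_ifs with hsign
  · have he : P.eraseLead ≠ 0 := by
      rintro he
      simp [he, hP] at hsign
    have hpos := natDegree_pos_of_eraseLead_ne_zero he
    by_cases hb : b ≤ P.natDegree
    · omega
    by_cases ha : P.eraseLead.natDegree < a
    · have := signVariations_le_natDegree P.eraseLead
      omega
    -- Otherwise both leading coefficients lie in the nonnegative range, so no sign change occurs.
    have hlead : 0 < P.leadingCoeff :=
      (h _ (by omega) (by omega)).lt_of_ne' (leadingCoeff_ne_zero.2 hP)
    have hlead' : 0 < P.eraseLead.leadingCoeff :=
      (he_coeff _ (by omega) (by omega)).lt_of_ne' (leadingCoeff_ne_zero.2 he)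
    simp [sign_pos hlead, sign_pos hlead'] at hsign
  · have := eraseLead_natDegree_le_aux (f := P)
    omega
termination_by P.support.card
decreasing_by exact eraseLead_support_card_lt hP

end SignVariations

theorem signVariations_le_of_coeff_nonpos {R : Type*} [Ring R] [LinearOrder R] [IsOrderedRing R]
    {P : R[X]} {a b : ℕ} (h : ∀ k, a ≤ k → k < b → P.coeff k ≤ 0) :
    signVariations P ≤ a + (P.natDegree + 1 - b) := by
  simpa using signVariations_le_of_coeff_nonneg (P := -P) fun k hak hkb => by
    simpa using h k hak hkb

theorem card_le_countP_roots_pos {R : Type*} [CommRing R] [IsDomain R] [LinearOrder R]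
    {P : R[X]} (hP : P ≠ 0) {s : Finset R} (hs : ∀ x ∈ s, 0 < x ∧ P.IsRoot x) :
    #s ≤ P.roots.countP (0 < ·) := by
  rw [Multiset.countP_eq_card_filter]
  refine Multiset.card_le_card ((Multiset.le_iff_subset s.nodup).2 fun x hx => ?_)
  exact Multiset.mem_filter.2 ⟨(mem_roots hP).2 (hs x hx).2, (hs x hx).1⟩

section OneAddSum

variable {R : Type*} [Semiring R]

theorem coeff_mul_geom_sum (P : R[X]) {M k : ℕ} (hk : M ≤ k + 1) :
    (P * ∑ i ∈ range M, X ^ i).coeff k = ∑ i ∈ range M, P.coeff (k - i) := by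
  rw [mul_sum, finsetSum_coeff]
  exact sum_congr rfl fun i hi => by rw [coeff_mul_X_pow', if_pos (by simp at hi; omega)]

theorem natDegree_geom_sum_le (M : ℕ) : (∑ i ∈ range M, (X : R[X]) ^ i).natDegree ≤ M - 1 :=
  natDegree_sum_le_of_forall_le _ _ fun i hi =>
    (natDegree_X_pow_le i).trans (by simp at hi; omega)

variable (ε : ℕ → R) (n : ℕ)

theorem coeff_zero_one_add_sum_C_mul_X_pow :
    (1 + ∑ k ∈ Icc 1 n, C (ε k) * X ^ k).coeff 0 = 1 := by
  simp [finsetSum_coeff]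

theorem coeff_one_add_sum_C_mul_X_pow {j : ℕ} (hj : 1 ≤ j) (hjn : j ≤ n) :
    (1 + ∑ k ∈ Icc 1 n, C (ε k) * X ^ k).coeff j = ε j := by
  simp [finsetSum_coeff, coeff_one, hj, hjn, Nat.one_le_iff_ne_zero.1 hj]

theorem natDegree_one_add_sum_C_mul_X_pow_le :
    (1 + ∑ k ∈ Icc 1 n, C (ε k) * X ^ k).natDegree ≤ n :=
  natDegree_add_le_of_degree_le (natDegree_one.trans_le n.zero_le) <|
    natDegree_sum_le_of_forall_le _ _ fun k hk =>
      (natDegree_C_mul_X_pow_le _ _).trans (by simp at hk; omega)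

theorem coeff_one_add_sum_C_mul_X_pow_mul_geom_sum {M k : ℕ} (hMk : M ≤ k) (hkn : k ≤ n) :
    ((1 + ∑ k ∈ Icc 1 n, C (ε k) * X ^ k) * ∑ i ∈ range M, X ^ i).coeff k =
      ∑ i ∈ range M, ε (k - i) := by
  rw [coeff_mul_geom_sum _ (by omega)]
  exact sum_congr rfl fun i hi => by
    simp only [mem_range] at hi
    exact coeff_one_add_sum_C_mul_X_pow ε n (by omega) (by omega)

end OneAddSum

end Polynomial

section PeriodicWindow

variable {E : ℕ → Set ℝ} {M n k : ℕ} {ε : ℕ → ℝ}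

theorem sum_range_sub_le_sum_sSup_of_periodic (hbdd : ∀ k, 1 ≤ k → BddAbove (E k))
    (hper : ∀ k, 1 ≤ k → E (k + M) = E k) (hε : ∀ k, 1 ≤ k → k ≤ n → ε k ∈ E k)
    (hMk : M ≤ k) (hkn : k ≤ n) :
    ∑ i ∈ range M, ε (k - i) ≤ ∑ j ∈ Icc 1 M, sSup (E j) :=
  calc ∑ i ∈ range M, ε (k - i) ≤ ∑ i ∈ range M, sSup (E (k - i)) :=
        sum_le_sum fun i hi => by
          simp only [mem_range] at hi
          exact le_csSup (hbdd _ (by omega)) (hε _ (by omega) (by omega))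
    _ = ∑ j ∈ Icc 1 M, sSup (E j) :=
        sum_range_sub_eq_sum_Icc_of_periodic (f := fun j => sSup (E j))
          (fun j hj => by rw [hper j hj]) hMk

theorem sum_sInf_le_sum_range_sub_of_periodic (hbdd : ∀ k, 1 ≤ k → BddBelow (E k))
    (hper : ∀ k, 1 ≤ k → E (k + M) = E k) (hε : ∀ k, 1 ≤ k → k ≤ n → ε k ∈ E k)
    (hMk : M ≤ k) (hkn : k ≤ n) :
    ∑ j ∈ Icc 1 M, sInf (E j) ≤ ∑ i ∈ range M, ε (k - i) :=
  calc ∑ j ∈ Icc 1 M, sInf (E j) = ∑ i ∈ range M, sInf (E (k - i)) :=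
        (sum_range_sub_eq_sum_Icc_of_periodic (f := fun j => sInf (E j))
          (fun j hj => by rw [hper j hj]) hMk).symm
    _ ≤ ∑ i ∈ range M, ε (k - i) :=
        sum_le_sum fun i hi => by
          simp only [mem_range] at hi
          exact csInf_le (hbdd _ (by omega)) (hε _ (by omega) (by omega))

theorem signVariations_one_add_sum_C_mul_X_pow_mul_geom_sum_le {A : ℝ}
    (hsub : ∀ k, 1 ≤ k → E k ⊆ Set.Icc (-A) A) (hper : ∀ k, 1 ≤ k → E (k + M) = E k)
    (hsign : ∑ k ∈ Icc 1 M, sSup (E k) ≤ 0 ∨ 0 ≤ ∑ k ∈ Icc 1 M, sInf (E k))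
    (hε : ∀ k, 1 ≤ k → k ≤ n → ε k ∈ E k) :
    signVariations ((1 + ∑ k ∈ Icc 1 n, C (ε k) * X ^ k) * ∑ i ∈ range M, X ^ i) ≤ 2 * M := by
  set G := (1 + ∑ k ∈ Icc 1 n, C (ε k) * X ^ k) * ∑ i ∈ range M, X ^ i
  have hdeg : G.natDegree ≤ n + (M - 1) :=
    natDegree_mul_le.trans
      (add_le_add (natDegree_one_add_sum_C_mul_X_pow_le ε n) (natDegree_geom_sum_le M))
  suffices signVariations G ≤ M + (G.natDegree + 1 - (n + 1)) by omega
  rcases hsign with hmax | hmin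
  · refine signVariations_le_of_coeff_nonpos fun k hMk hkn => ?_
    rw [coeff_one_add_sum_C_mul_X_pow_mul_geom_sum ε n hMk (by omega)]
    exact (sum_range_sub_le_sum_sSup_of_periodic (fun j hj => bddAbove_Icc.mono (hsub j hj))
      hper hε hMk (by omega)).trans hmax
  · refine signVariations_le_of_coeff_nonneg fun k hMk hkn => ?_
    rw [coeff_one_add_sum_C_mul_X_pow_mul_geom_sum ε n hMk (by omega)]
    exact hmin.trans (sum_sInf_le_sum_range_sub_of_periodic
      (fun j hj => bddBelow_Icc.mono (hsub j hj)) hper hε hMk (by omega))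

end PeriodicWindow

theorem periodic_obstruction_general
    (M : ℕ) (hM : 0 < M) (A : ℝ)
    (E : ℕ → Set ℝ)
    (hsub : ∀ k, 1 ≤ k → E k ⊆ Set.Icc (-A) A)
    (hper : ∀ k, 1 ≤ k → E (k + M) = E k)
    (hdeg : (∑ k ∈ Finset.Icc 1 M, sSup (E k)) ≤ 0 ∨
            0 ≤ ∑ k ∈ Finset.Icc 1 M, sInf (E k)) :
    ∀ n : ℕ, ∀ ε : ℕ → ℝ, (∀ k, 1 ≤ k → k ≤ n → ε k ∈ E k) →
      ∀ roots : Finset ℝ, ↑roots ⊆ Set.Icc (0 : ℝ) 1 →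
        (∀ x ∈ roots, 1 + ∑ k ∈ Finset.Icc 1 n, ε k * x ^ k = 0) →
        roots.card ≤ 3 * M := by
  intro n ε hε roots hroots hroot
  set P : ℝ[X] := 1 + ∑ k ∈ Icc 1 n, C (ε k) * X ^ k
  have hP0 : P.coeff 0 = 1 := coeff_zero_one_add_sum_C_mul_X_pow ε n
  have hG : P * ∑ i ∈ range M, X ^ i ≠ 0 :=
    mul_ne_zero (fun h => by simp [h] at hP0) (monic_geom_sum_X hM.ne').ne_zero
  have hpos : ∀ x ∈ roots, 0 < x ∧ (P * ∑ i ∈ range M, X ^ i).IsRoot x := by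
    intro x hx
    have hPx : P.eval x = 0 := by simpa [P, eval_finsetSum] using hroot x hx
    refine ⟨(hroots hx).1.lt_of_ne fun h0 => ?_, by simp [hPx]⟩
    rw [← h0, ← coeff_zero_eq_eval_zero, hP0] at hPx
    exact one_ne_zero hPx
  calc roots.card ≤ (P * ∑ i ∈ range M, X ^ i).roots.countP (0 < ·) :=
        card_le_countP_roots_pos hG hpos
    _ ≤ signVariations (P * ∑ i ∈ range M, X ^ i) := roots_countP_pos_le_signVariations _
    _ ≤ 2 * M := signVariations_one_add_sum_C_mul_X_pow_mul_geom_sum_le hsub hper hdeg hε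
    _ ≤ 3 * M := by omega

/-- If `(E k)` is an `M`-periodic sequence of nonempty closed sets `E k ⊆ [-A, A]`
with `∑_{k=1}^M max E_k ≤ 0` or `∑_{k=1}^M min E_k ≥ 0`, then every polynomial
`P_n(x) = 1 + ∑_{k=1}^n ε_k x^k` with `ε_k ∈ E_k` has at most `3M` distinct
roots in `[0, 1]`. -/
theorem periodic_obstruction
    (M : ℕ) (hM : 0 < M) (A : ℝ) (hA : 0 < A)
    (E : ℕ → Set ℝ)
    (hne : ∀ k, 1 ≤ k → (E k).Nonempty)
    (hclosed : ∀ k, 1 ≤ k → IsClosed (E k))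
    (hsub : ∀ k, 1 ≤ k → E k ⊆ Set.Icc (-A) A)
    (hper : ∀ k, 1 ≤ k → E (k + M) = E k)
    (hdeg : (∑ k ∈ Finset.Icc 1 M, sSup (E k)) ≤ 0 ∨
            0 ≤ ∑ k ∈ Finset.Icc 1 M, sInf (E k)) :
    ∀ n : ℕ, ∀ ε : ℕ → ℝ, (∀ k, 1 ≤ k → k ≤ n → ε k ∈ E k) →
      ∀ roots : Finset ℝ, ↑roots ⊆ Set.Icc (0 : ℝ) 1 →
        (∀ x ∈ roots, 1 + ∑ k ∈ Finset.Icc 1 n, ε k * x ^ k = 0) →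
        roots.card ≤ 3 * M :=
  periodic_obstruction_general M hM A E hsub hper hdeg
end

section
/- Let $(\nu_k)_{k \ge 0}$ be real numbers with $\sum_{k=0}^\infty |\nu_k| < \infty$, and set $U_k = \sum_{i=k}^\infty |\nu_i|$. Let $\mu \in (0,1)$, $\Lambda > 0$, and $L > 0$ satisfy $\frac{L+1}{L}\mu \le 1$, and let $n \ge 0$ be an integer. Suppose $\psi \in \mathbb{R}$ satisfies $|\psi| \le \mu\Lambda$ and $(\lambda_k)_{k \ge 1}$ are reals with $|\lambda_k| \le \Lambda U_k$ for all $k \ge 1$. Define $\lambda'_k = \frac{L+n+1}{L+n}\big(\mu \lambda_{k+1} + \psi \nu_k\big)$ for $k \ge 1$. Then $|\lambda'_k| \le \Lambda U_k$ for all $k \ge 1$. -/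
/-- **Invariance of the λ-bounds.** With `U k = ∑_{i≥k} |ν i|`, `(L+1)μ/L ≤ 1`,
`|ψ| ≤ μΛ`, and `|λ_k| ≤ Λ U_k` for `k ≥ 1`, the updated values
`λ'_k = ((L+n+1)/(L+n))(μ λ_{k+1} + ψ ν_k)` again satisfy `|λ'_k| ≤ Λ U_k`. -/
theorem lambda_invariance
    (ν : ℕ → ℝ) (hν : Summable fun k => |ν k|)
    (μ Λ L : ℝ) (hμ : μ ∈ Set.Ioo (0 : ℝ) 1) (hΛ : 0 < Λ) (hL : 0 < L)
    (hLμ : (L + 1) / L * μ ≤ 1) (n : ℕ)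
    (ψ : ℝ) (hψ : |ψ| ≤ μ * Λ)
    (lam : ℕ → ℝ) (hlam : ∀ k, 1 ≤ k → |lam k| ≤ Λ * ∑' i : ℕ, |ν (k + i)|) :
    ∀ k, 1 ≤ k →
      |(L + n + 1) / (L + n) * (μ * lam (k + 1) + ψ * ν k)| ≤
        Λ * ∑' i : ℕ, |ν (k + i)| := by
  obtain ⟨hμ0, hμ1⟩ := hμ
  intro k hk
  have hsum : ∀ m : ℕ, Summable fun i => |ν (m + i)| := fun m =>
    ((summable_nat_add_iff m).2 hν).congr (fun i => by rw [Nat.add_comm])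
  -- U_k = |ν k| + U_{k+1}
  have hU : (∑' i : ℕ, |ν (k + i)|) = |ν k| + ∑' i : ℕ, |ν (k + 1 + i)| := by
    rw [Summable.tsum_eq_zero_add (hsum k), Nat.add_zero]
    congr 1
    apply tsum_congr; intro i; congr 2; omega
  have hU1nonneg : (0 : ℝ) ≤ ∑' i : ℕ, |ν (k + 1 + i)| :=
    tsum_nonneg fun i => abs_nonneg _
  have hLn : (0 : ℝ) < L + n := by positivity
  have hfrac : (L + n + 1) / (L + n) ≤ (L + 1) / L := by
    rw [div_le_div_iff₀ hLn hL]
    nlinarith [Nat.cast_nonneg (α := ℝ) n]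
  have h1 : |μ * lam (k + 1) + ψ * ν k| ≤
      μ * Λ * ((∑' i : ℕ, |ν (k + 1 + i)|) + |ν k|) := by
    calc |μ * lam (k + 1) + ψ * ν k| ≤ |μ * lam (k + 1)| + |ψ * ν k| := abs_add_le _ _
      _ = μ * |lam (k + 1)| + |ψ| * |ν k| := by
          rw [abs_mul, abs_mul, abs_of_pos hμ0]
      _ ≤ μ * (Λ * ∑' i : ℕ, |ν (k + 1 + i)|) + (μ * Λ) * |ν k| := by
          gcongr
          exact hlam (k + 1) (by omega)
      _ = μ * Λ * ((∑' i : ℕ, |ν (k + 1 + i)|) + |ν k|) := by ring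
  have hfracpos : (0 : ℝ) < (L + n + 1) / (L + n) := by positivity
  calc |(L + n + 1) / (L + n) * (μ * lam (k + 1) + ψ * ν k)|
      = (L + n + 1) / (L + n) * |μ * lam (k + 1) + ψ * ν k| := by
        rw [abs_mul, abs_of_pos hfracpos]
    _ ≤ (L + 1) / L * (μ * Λ * ((∑' i : ℕ, |ν (k + 1 + i)|) + |ν k|)) := by
        apply mul_le_mul hfrac h1 (abs_nonneg _) (by positivity)
    _ = ((L + 1) / L * μ) * (Λ * ((∑' i : ℕ, |ν (k + 1 + i)|) + |ν k|)) := by ring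
    _ ≤ 1 * (Λ * ((∑' i : ℕ, |ν (k + 1 + i)|) + |ν k|)) := by
        apply mul_le_mul_of_nonneg_right hLμ; positivity
    _ = Λ * ∑' i : ℕ, |ν (k + i)| := by rw [hU]; ring
end

section
/- Let $t \in (0,1)$ and let $z \in \mathbb{C}$ satisfy $|z - \tfrac{1}{3}| = \tfrac{2}{3}$. Then $\left|\frac{1 - t z}{t(t - z)}\right| \le \frac{1}{t^2}$. -/
set_option maxHeartbeats 1000000 in
/-- **Blaschke factor bound on the circle `|z - 1/3| = 2/3`.** For `t ∈ (0,1)` and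
`|z - 1/3| = 2/3`, one has `|(1 - tz)/(t(t - z))| ≤ 1/t²`. -/
theorem blaschke_factor_bound
    (t : ℝ) (ht : t ∈ Set.Ioo (0 : ℝ) 1)
    (z : ℂ) (hz : ‖z - 1 / 3‖ = 2 / 3) :
    ‖(1 - (t : ℂ) * z) / ((t : ℂ) * ((t : ℂ) - z))‖ ≤ 1 / t ^ 2 := by
  obtain ⟨ht0, ht1⟩ := ht
  have hns : Complex.normSq (z - 1/3) = 4/9 := by
    rw [← Complex.sq_norm, hz]; norm_num
  have hsq : (z.re - 1/3)^2 + z.im^2 = 4/9 := by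
    have h1 : (z - 1/3).re = z.re - 1/3 := by simp
    have h2 : (z - 1/3).im = z.im := by simp
    rw [Complex.normSq_apply, h1, h2] at hns
    nlinarith [hns]
  clear hns hz
  have hzt : 0 < ‖(t : ℂ) - z‖ := by
    have hne : ((t : ℂ) - z) ≠ 0 := by
      intro h
      have hre : t - z.re = 0 := by
        have := congrArg Complex.re h; simpa using this
      have him : (0 : ℝ) - z.im = 0 := by
        have := congrArg Complex.im h; simpa using this
      have hx' : z.re = t := by linarith
      have hy' : z.im = 0 := by linarith
      rw [hx', hy'] at hsq
      nlinarith [hsq]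
    exact norm_pos_iff.mpr hne
  have hA : ‖1 - (t : ℂ) * z‖^2 = (1 - t*z.re)^2 + (t*z.im)^2 := by
    rw [Complex.sq_norm, Complex.normSq_apply]
    simp
    ring
  have hB : ‖(t : ℂ) - z‖^2 = (t - z.re)^2 + z.im^2 := by
    rw [Complex.sq_norm, Complex.normSq_apply]
    simp
    ring
  have key : t * ‖1 - (t : ℂ) * z‖ ≤ ‖(t : ℂ) - z‖ := by
    have hbound : (3*z.re+1)*(1-z.re) ≥ 0 := by nlinarith [hsq, sq_nonneg z.im]
    have hx1 : z.re ≤ 1 := by nlinarith [hbound, sq_nonneg (3*z.re+1)]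
    have hx2 : -(1/3) ≤ z.re := by nlinarith [hbound, sq_nonneg (1-z.re)]
    have hP : (0:ℝ) ≤ (z.re + 1/3) * (1-t)^2 :=
      mul_nonneg (by linarith) (sq_nonneg _)
    have hQ : (0:ℝ) ≤ (1 - z.re) * (1 + 6*t + t^2) :=
      mul_nonneg (by linarith) (by nlinarith [sq_nonneg t, ht0.le])
    have hlin : (2*z.re+1)*(1+t^2) - 6*t*z.re ≥ 0 := by nlinarith [hP, hQ]
    have hy2 : z.im^2 = (2*z.re+1)/3 - z.re^2 := by linear_combination hsq
    have hy2t : t^4*z.im^2 = t^4*((2*z.re+1)/3 - z.re^2) := by rw [hy2]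
    have h1t : (0:ℝ) ≤ 1 - t^2 := by nlinarith [ht0.le, ht1]
    have hprod : (0:ℝ) ≤ (1 - t^2) * ((2*z.re+1)*(1+t^2) - 6*t*z.re) :=
      mul_nonneg h1t hlin
    have h1 : (t * ‖1 - (t : ℂ) * z‖)^2 ≤ ‖(t : ℂ) - z‖^2 := by
      rw [mul_pow, hA, hB]
      linarith [hprod, hy2, hy2t]
    exact (pow_le_pow_iff_left₀ (mul_nonneg ht0.le (norm_nonneg _)) hzt.le
      (by norm_num)).mp h1
  rw [norm_div, norm_mul, Complex.norm_real, Real.norm_eq_abs, abs_of_pos ht0,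
    div_le_div_iff₀ (by positivity) (by positivity)]
  linarith [mul_le_mul_of_nonneg_left key ht0.le]
end

section
/- Let $s, \ell \in \mathbb{N}$ and $t_1, \dots, t_s \in (0,1)$. Define $B(z) = \prod_{j=1}^s \frac{1 - t_j z}{t_j (t_j - z)}$ and $G_\ell(z) = 1 - \frac{\ell+1}{\ell} z^{-1} + \frac{1}{\ell} z^{-\ell-1}$, and for $k = 0, 1, 2, \dots$ let $c_k = \frac{1}{2\pi i}\oint_{|z|=1} B(z) G_\ell(z) z^k \, dz$ (the circle traversed counterclockwise). Then for each $j \in \{1, \dots, s\}$, the series $\sum_{k=0}^\infty c_k t_j^k$ converges and $\sum_{k=0}^\infty c_k t_j^k = -\frac{1}{t_j}$. Moreover, every $c_k$ is real. -/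
open scoped Real
open Complex Metric Filter Topology

lemma aux_diff_factor (a : ℂ) {z : ℂ} (ha : a ≠ 0) (hz : a - z ≠ 0) :
    DifferentiableAt ℂ (fun w => (1 - a * w) / (a * (a - w))) z := by
  apply DifferentiableAt.div (by fun_prop) (by fun_prop)
  exact mul_ne_zero ha hz

lemma aux_diff_G (ℓ : ℕ) {z : ℂ} (hz : z ≠ 0) :
    DifferentiableAt ℂ (fun w => 1 - ((ℓ:ℂ)+1)/(ℓ:ℂ) * w⁻¹ + 1/(ℓ:ℂ) * (w ^ (ℓ+1))⁻¹) z := by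
  have h1 : DifferentiableAt ℂ (fun w : ℂ => w⁻¹) z := differentiableAt_inv hz
  have h2 : DifferentiableAt ℂ (fun w : ℂ => (w ^ (ℓ+1))⁻¹) z :=
    (differentiableAt_pow _).inv (pow_ne_zero _ hz)
  exact ((differentiableAt_const _).sub (h1.const_mul _)).add (h2.const_mul _)

/-- With `B(z) = ∏_j (1 - t_j z)/(t_j(t_j - z))`,
`G_ℓ(z) = 1 - ((ℓ+1)/ℓ) z⁻¹ + (1/ℓ) z^{-ℓ-1}` and
`c_k = (1/(2πi)) ∮_{|z|=1} B(z) G_ℓ(z) z^k dz`, for every `j` the series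
`∑_k c_k t_j^k` converges to `-1/t_j`; moreover every `c_k` is real. -/
theorem contour_coefficients
    (s ℓ : ℕ) (hs : 1 ≤ s) (hℓ : 1 ≤ ℓ) (t : Fin s → ℝ)
    (ht : ∀ j, t j ∈ Set.Ioo (0 : ℝ) 1) :
    ∀ B G : ℂ → ℂ,
      (B = fun z => ∏ j, (1 - (t j : ℂ) * z) / ((t j : ℂ) * ((t j : ℂ) - z))) →
      (G = fun z => 1 - ((ℓ : ℂ) + 1) / (ℓ : ℂ) * z⁻¹ + 1 / (ℓ : ℂ) * (z ^ (ℓ + 1))⁻¹) →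
      ∀ c : ℕ → ℂ,
        (c = fun k => (2 * Real.pi * Complex.I)⁻¹ *
          ∮ z in C(0, 1), B z * G z * z ^ k) →
        (∀ j, Summable (fun k : ℕ => c k * (t j : ℂ) ^ k) ∧
          (∑' k : ℕ, c k * (t j : ℂ) ^ k) = -(1 / (t j : ℂ))) ∧
        ∀ k, (c k).im = 0 := by
  intro B G hB hG c hc
  have hπ : (0:ℝ) < Real.pi := Real.pi_pos
  have ht0 : ∀ i, (0:ℝ) < t i := fun i => (ht i).1
  have ht1 : ∀ i, t i < 1 := fun i => (ht i).2
  have hTne : ∀ i, ((t i : ℝ):ℂ) ≠ 0 := fun i => by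
    exact_mod_cast ne_of_gt (ht0 i)
  have habs : ∀ i, ‖((t i : ℝ):ℂ)‖ = t i := fun i => by
    rw [Complex.norm_real, Real.norm_eq_abs, abs_of_pos (ht0 i)]
  have hTsub : ∀ (i : Fin s) (z : ℂ), 1 ≤ ‖z‖ → ((t i:ℝ):ℂ) - z ≠ 0 := by
    intro i z hz h
    rw [sub_eq_zero] at h
    rw [← h, habs i] at hz
    exact absurd hz (not_le.mpr (ht1 i))
  have hz0 : ∀ z : ℂ, 1 ≤ ‖z‖ → z ≠ 0 := by
    intro z hz h; rw [h] at hz; simp at hz; exact absurd hz (by norm_num)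
  have hsp1 : ∀ z ∈ Metric.sphere (0:ℂ) 1, (1:ℝ) ≤ ‖z‖ := by
    intro z hz
    rw [mem_sphere_zero_iff_norm] at hz
    rw [hz]
  -- pointwise formulas
  have hBz : ∀ z, B z = ∏ i, (1 - ((t i:ℝ):ℂ) * z) / (((t i:ℝ):ℂ) * (((t i:ℝ):ℂ) - z)) :=
    fun z => by rw [hB]
  have hGz : ∀ z, G z = 1 - ((ℓ:ℂ)+1)/(ℓ:ℂ) * z⁻¹ + 1/(ℓ:ℂ) * (z ^ (ℓ+1))⁻¹ :=
    fun z => by rw [hG]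
  have hck : ∀ k, c k = (2 * Real.pi * Complex.I)⁻¹ *
      ∮ z in C(0, 1), B z * G z * z ^ k := fun k => by rw [hc]
  -- differentiability of B * G outside the open unit disc
  have hdf : ∀ z : ℂ, 1 ≤ ‖z‖ → DifferentiableAt ℂ (fun z => B z * G z) z := by
    intro z hz
    have hBd : DifferentiableAt ℂ B z := by
      rw [hB]
      exact DifferentiableAt.fun_finsetProd (fun i _ => aux_diff_factor _ (hTne i) (hTsub i z hz))
    have hGd : DifferentiableAt ℂ G z := by rw [hG]; exact aux_diff_G ℓ (hz0 z hz)
    exact hBd.mul hGd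
  have hfc : ContinuousOn (fun z => B z * G z) (Metric.sphere (0:ℂ) 1) :=
    fun z hz => ((hdf z (hsp1 z hz)).continuousAt).continuousWithinAt
  obtain ⟨M, hM⟩ := (isCompact_sphere (0:ℂ) 1).exists_bound_of_continuousOn hfc
  have hcont : Continuous fun θ : ℝ => (B (circleMap 0 1 θ) * G (circleMap 0 1 θ)) :=
    hfc.comp_continuous (continuous_circleMap 0 1) (fun θ => circleMap_mem_sphere 0 zero_le_one θ)
  constructor
  · intro j
    set w : ℂ := ((t j:ℝ):ℂ) with hw
    have hwabs : ‖w‖ = t j := habs j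
    have hwne : w ≠ 0 := hTne j
    set P : ℂ → ℂ := fun z => ∏ i ∈ Finset.univ.erase j,
        (1 - ((t i:ℝ):ℂ) * z) / (((t i:ℝ):ℂ) * (((t i:ℝ):ℂ) - z)) with hP
    set Hout : ℂ → ℂ := fun z => P z * (w * (w - z))⁻¹ * G z with hHout
    have hdP : ∀ z : ℂ, 1 ≤ ‖z‖ → DifferentiableAt ℂ P z := by
      intro z hz
      rw [hP]
      exact DifferentiableAt.fun_finsetProd (fun i _ => aux_diff_factor _ (hTne i) (hTsub i z hz))
    have hdHout : ∀ z : ℂ, 1 ≤ ‖z‖ → DifferentiableAt ℂ Hout z := by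
      intro z hz
      have h2a : DifferentiableAt ℂ (fun z : ℂ => w * (w - z)) z := by fun_prop
      have h2 : DifferentiableAt ℂ (fun z : ℂ => (w * (w - z))⁻¹) z :=
        h2a.inv (mul_ne_zero hwne (hTsub j z hz))
      have h3 : DifferentiableAt ℂ G z := by rw [hG]; exact aux_diff_G ℓ (hz0 z hz)
      exact ((hdP z hz).mul h2).mul h3
    set Rf : ℂ → ℂ := fun z => Hout z + (w * z)⁻¹ with hRf
    have hdRf : ∀ z : ℂ, 1 ≤ ‖z‖ → DifferentiableAt ℂ Rf z := by
      intro z hz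
      have h2a : DifferentiableAt ℂ (fun z : ℂ => w * z) z := by fun_prop
      exact (hdHout z hz).add (h2a.inv (mul_ne_zero hwne (hz0 z hz)))
    have hnb : ∀ {r : ℝ} {z : ℂ}, z ∉ ball (0:ℂ) r → r ≤ ‖z‖ := by
      intro r z h
      simp only [mem_ball, Complex.dist_eq, sub_zero, not_lt] at h
      exact h
    have hnb' : ∀ {r : ℝ} {z : ℂ}, z ∉ closedBall (0:ℂ) r → r ≤ ‖z‖ := by
      intro r z h
      simp only [mem_closedBall, Complex.dist_eq, sub_zero, not_le] at h
      exact h.le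
    have hannulus : ∀ ρ : ℝ, 1 ≤ ρ → (∮ z in C(0,ρ), Rf z) = ∮ z in C(0,1), Rf z := by
      intro ρ hρ
      refine circleIntegral_eq_of_differentiable_on_annulus_off_countable zero_lt_one hρ
        Set.countable_empty ?_ ?_
      · intro z hz
        exact ((hdRf z (hnb hz.2)).continuousAt).continuousWithinAt
      · intro z hz
        exact hdRf z (hnb' hz.1.2)
    have hfac : ∀ (i : Fin s) (z : ℂ), 1 ≤ ‖z‖ →
        (1 - ((t i:ℝ):ℂ) * z) / (((t i:ℝ):ℂ) * (((t i:ℝ):ℂ) - z))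
        = (z⁻¹ - ((t i:ℝ):ℂ)) / (((t i:ℝ):ℂ) * (((t i:ℝ):ℂ) * z⁻¹ - 1)) := by
      intro i z hz
      have hz' : z ≠ 0 := hz0 z hz
      rw [← mul_div_mul_right (z⁻¹ - ((t i:ℝ):ℂ)) (((t i:ℝ):ℂ) * (((t i:ℝ):ℂ) * z⁻¹ - 1)) hz']
      congr 1
      · field_simp
      · field_simp
    have hGinv : ∀ z : ℂ, G z = 1 - ((ℓ:ℂ)+1)/(ℓ:ℂ) * z⁻¹ + 1/(ℓ:ℂ) * (z⁻¹) ^ (ℓ+1) := by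
      intro z; rw [hGz z, inv_pow]
    set Ψ : ℂ → ℂ := fun u =>
      (∏ i ∈ Finset.univ.erase j, (u - ((t i:ℝ):ℂ)) / (((t i:ℝ):ℂ) * (((t i:ℝ):ℂ) * u - 1)))
        * (w * (w * u - 1))⁻¹ * (1 - ((ℓ:ℂ)+1)/(ℓ:ℂ) * u + 1/(ℓ:ℂ) * u ^ (ℓ+1)) + w⁻¹ with hΨ
    have hΨ0 : Ψ 0 = 0 := by
      simp only [hΨ, Finset.prod_const_one, one_mul, mul_zero, zero_sub, mul_neg_one,
        zero_pow (Nat.succ_ne_zero ℓ), sub_zero, add_zero, inv_neg]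
      rw [show (∏ x ∈ Finset.univ.erase j, -((t x:ℝ):ℂ) / -((t x:ℝ):ℂ)) = 1 from
        Finset.prod_eq_one fun i _ => div_self (neg_ne_zero.mpr (hTne i))]
      ring
    have hΨd : DifferentiableAt ℂ Ψ 0 := by
      refine DifferentiableAt.add (DifferentiableAt.mul (DifferentiableAt.mul ?_ ?_) ?_)
        (differentiableAt_const _)
      · refine DifferentiableAt.fun_finsetProd fun i _ =>
          DifferentiableAt.div (by fun_prop) (by fun_prop) ?_
        simp [hTne i]
      · refine DifferentiableAt.inv (by fun_prop) ?_
        simp [hwne]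
      · fun_prop
    have hkey : ∀ z : ℂ, 1 ≤ ‖z‖ → z * Rf z = Ψ z⁻¹ := by
      intro z hz
      have hz' : z ≠ 0 := hz0 z hz
      have hwz : w - z ≠ 0 := hTsub j z hz
      have hPz : P z = ∏ i ∈ Finset.univ.erase j,
          (z⁻¹ - ((t i:ℝ):ℂ)) / (((t i:ℝ):ℂ) * (((t i:ℝ):ℂ) * z⁻¹ - 1)) := by
        rw [hP]
        exact Finset.prod_congr rfl fun i _ => hfac i z hz
      have hmulz : (w * z⁻¹ - 1) * z = w - z := by field_simp; try ring
      have hne2 : w * z⁻¹ - 1 ≠ 0 := fun h => hwz (by rw [← hmulz, h, zero_mul])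
      have h1 : z * (w * (w - z))⁻¹ = (w * (w * z⁻¹ - 1))⁻¹ := by
        field_simp [hwne, hwz, hz', hne2]
        try ring
      have h2 : z * (w * z)⁻¹ = w⁻¹ := by
        field_simp
        try ring
      simp only [hRf, hHout]
      rw [hGinv z, hPz]
      simp only [hΨ]
      rw [← h1, ← h2]
      ring
    have hφ : Tendsto (fun z : ℂ => z * Rf z) (Bornology.cobounded ℂ) (𝓝 0) := by
      have h1 : Tendsto (fun z : ℂ => Ψ z⁻¹) (Bornology.cobounded ℂ) (𝓝 0) := by
        rw [← hΨ0]
        exact hΨd.continuousAt.tendsto.comp tendsto_inv₀_cobounded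
      refine h1.congr' ?_
      filter_upwards [eventually_cobounded_le_norm 1] with z hz
      exact (hkey z hz).symm
    have hRint0 : (∮ z in C(0,1), Rf z) = 0 := by
      have hle : ∀ ε : ℝ, 0 < ε → ‖∮ z in C(0,1), Rf z‖ ≤ 2 * π * ε := by
        intro ε hε
        have hev : ∀ᶠ z : ℂ in Bornology.cobounded ℂ, ‖z * Rf z‖ < ε := by
          have hball : ∀ᶠ y : ℂ in 𝓝 (0:ℂ), ‖y‖ < ε := by
            filter_upwards [Metric.ball_mem_nhds (0:ℂ) hε] with y hy
            simpa [Metric.mem_ball, dist_zero_right] using hy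
          exact hφ.eventually hball
        rw [← comap_norm_atTop, Filter.eventually_comap] at hev
        obtain ⟨M', hM'⟩ := Filter.eventually_atTop.mp hev
        set ρ : ℝ := max M' 1 with hρ
        have hρ1 : (1:ℝ) ≤ ρ := le_max_right _ _
        have hρ0 : (0:ℝ) < ρ := lt_of_lt_of_le one_pos hρ1
        have hbound : ∀ z ∈ sphere (0:ℂ) ρ, ‖Rf z‖ ≤ ε / ρ := by
          intro z hz
          have hzn : ‖z‖ = ρ := by rwa [mem_sphere_zero_iff_norm] at hz
          have h3 := hM' ρ (le_max_left _ _) z hzn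
          have h4 : ‖z * Rf z‖ = ρ * ‖Rf z‖ := by rw [norm_mul, hzn]
          rw [h4] at h3
          rw [le_div_iff₀ hρ0]
          nlinarith [norm_nonneg (Rf z)]
        calc ‖∮ z in C(0,1), Rf z‖ = ‖∮ z in C(0,ρ), Rf z‖ := by rw [hannulus ρ hρ1]
          _ ≤ 2 * π * ρ * (ε / ρ) :=
              circleIntegral.norm_integral_le_of_norm_le_const hρ0.le hbound
          _ = 2 * π * ε := by
              field_simp [hρ0.ne']
              try ring
      have h0 : ‖∮ z in C(0,1), Rf z‖ ≤ 0 := by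
        refine le_of_forall_pos_le_add fun ε hε => ?_
        have h1 := hle (ε / (2 * π)) (by positivity)
        have h2 : 2 * π * (ε / (2 * π)) = ε := by field_simp
        rw [h2] at h1
        linarith
      exact norm_le_zero_iff.mp h0
    have hcRf : ContinuousOn Rf (sphere (0:ℂ) 1) :=
      fun z hz => ((hdRf z (hsp1 z hz)).continuousAt).continuousWithinAt
    have hcwz : ContinuousOn (fun z : ℂ => (w*z)⁻¹) (sphere (0:ℂ) 1) := by
      intro z hz
      have h2a : DifferentiableAt ℂ (fun z : ℂ => w * z) z := by fun_prop
      exact (h2a.inv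
        (mul_ne_zero hwne (hz0 z (hsp1 z hz)))).continuousAt.continuousWithinAt
    have hwzint : (∮ z in C(0,1), (w*z)⁻¹) = 2 * ↑π * Complex.I * w⁻¹ := by
      have h0 : (0:ℂ) ∈ ball (0:ℂ) 1 := mem_ball_self one_pos
      have h2 := circleIntegral.integral_sub_inv_of_mem_ball h0
      calc (∮ z in C(0,1), (w*z)⁻¹) = ∮ z in C(0,1), w⁻¹ * z⁻¹ :=
            circleIntegral.integral_congr zero_le_one (fun z hz => by rw [mul_inv])
        _ = w⁻¹ * ∮ z in C(0,1), z⁻¹ := circleIntegral.integral_const_mul _ _ _ _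
        _ = 2 * ↑π * Complex.I * w⁻¹ := by
            have h3 : (∮ z in C(0,1), z⁻¹) = 2 * ↑π * Complex.I := by simpa using h2
            rw [h3]; ring
    have hHoutint : (∮ z in C(0,1), Hout z) = -(2 * ↑π * Complex.I * w⁻¹) := by
      have hsub := circleIntegral.integral_sub (hcRf.circleIntegrable zero_le_one)
        (hcwz.circleIntegrable zero_le_one)
      have hcong : (∮ z in C(0,1), Hout z) = ∮ z in C(0,1), (Rf z - (w*z)⁻¹) :=
        circleIntegral.integral_congr zero_le_one (fun z hz => by simp only [hRf]; ring)
      rw [hcong, hsub, hRint0, hwzint, zero_sub]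
    have hHeq : Set.EqOn (fun z => B z * G z * (1 - w*z)⁻¹) Hout (sphere (0:ℂ) 1) := by
      intro z hz
      have h1 : ‖z‖ = 1 := by
        rwa [mem_sphere_zero_iff_norm] at hz
      have hne : (1:ℂ) - w * z ≠ 0 := by
        intro h
        rw [sub_eq_zero] at h
        have h5 : ‖w * z‖ = 1 := by rw [← h]; simp
        rw [norm_mul, hwabs, h1, mul_one] at h5
        exact absurd h5 (ne_of_lt (ht1 j))
      have hwz : w - z ≠ 0 := hTsub j z (le_of_eq h1.symm)
      have hgj : (1 - w*z)/(w*(w-z)) * (1 - w*z)⁻¹ = (w*(w-z))⁻¹ := by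
        field_simp
        try ring
      show B z * G z * (1 - w*z)⁻¹ = Hout z
      rw [hBz z, ← Finset.mul_prod_erase Finset.univ _ (Finset.mem_univ j)]
      simp only [hHout, hP]
      rw [← hw, ← hgj]
      ring
    have hwlt : ∀ θ : ℝ, ‖w * circleMap 0 1 θ‖ < 1 := by
      intro θ
      rw [norm_mul, hwabs, norm_circleMap_zero]
      simpa using ht1 j
    have hHasSum : HasSum (fun k : ℕ => (∮ z in C(0,1), B z * G z * z ^ k) * w ^ k)
        (∮ z in C(0,1), B z * G z * (1 - w * z)⁻¹) := by
      simp only [circleIntegral, deriv_circleMap, smul_eq_mul]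
      have hrw : ∀ k : ℕ, (∫ θ in (0:ℝ)..2*π,
            circleMap 0 1 θ * Complex.I *
              (B (circleMap 0 1 θ) * G (circleMap 0 1 θ) * circleMap 0 1 θ ^ k)) * w ^ k
          = ∫ θ in (0:ℝ)..2*π,
            circleMap 0 1 θ * Complex.I *
              (B (circleMap 0 1 θ) * G (circleMap 0 1 θ) * circleMap 0 1 θ ^ k) * w ^ k :=
        fun k => (intervalIntegral.integral_mul_const _ _).symm
      simp only [hrw]
      refine intervalIntegral.hasSum_integral_of_dominated_convergence
        (bound := fun (k:ℕ) (_ : ℝ) => M * t j ^ k) ?_ ?_ ?_ ?_ ?_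
      · intro k
        apply Continuous.aestronglyMeasurable
        exact (((continuous_circleMap 0 1).mul continuous_const).mul
          (hcont.mul ((continuous_circleMap 0 1).pow k))).mul continuous_const
      · intro k
        refine MeasureTheory.ae_of_all _ fun θ _ => ?_
        have hMθ := hM _ (circleMap_mem_sphere 0 zero_le_one θ)
        simp only [norm_mul] at hMθ ⊢
        have h1 : ‖circleMap 0 1 θ‖ = 1 := by
          rw [norm_circleMap_zero]; norm_num
        have h2 : ‖w‖ = t j := by rw [hwabs]
        simp only [norm_pow, h1, h2, Complex.norm_I, one_mul, mul_one, one_pow]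
        exact mul_le_mul_of_nonneg_right hMθ (pow_nonneg (ht0 j).le _)
      · exact MeasureTheory.ae_of_all _ fun θ _ =>
          Summable.mul_left M (summable_geometric_of_lt_one (ht0 j).le (ht1 j))
      · exact intervalIntegrable_const
      · refine MeasureTheory.ae_of_all _ fun θ _ => ?_
        have hg := hasSum_geometric_of_norm_lt_one (hwlt θ)
        have h5 := hg.mul_left (circleMap 0 1 θ * Complex.I *
          (B (circleMap 0 1 θ) * G (circleMap 0 1 θ)))
        have heq : (fun k : ℕ => circleMap 0 1 θ * Complex.I *
              (B (circleMap 0 1 θ) * G (circleMap 0 1 θ)) * (w * circleMap 0 1 θ) ^ k)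
            = fun k : ℕ => circleMap 0 1 θ * Complex.I *
              (B (circleMap 0 1 θ) * G (circleMap 0 1 θ) * circleMap 0 1 θ ^ k) * w ^ k := by
          funext k; rw [mul_pow]; ring
        rw [heq] at h5
        convert h5 using 1
        · rfl
        ring
    have hval : (∮ z in C(0,1), B z * G z * (1 - w*z)⁻¹) = -(2 * ↑π * Complex.I * w⁻¹) := by
      rw [circleIntegral.integral_congr zero_le_one hHeq, hHoutint]
    rw [hval] at hHasSum
    have hIπ : (2 * (π:ℂ) * Complex.I : ℂ) ≠ 0 :=
      mul_ne_zero (mul_ne_zero two_ne_zero (Complex.ofReal_ne_zero.mpr Real.pi_ne_zero))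
        Complex.I_ne_zero
    have hfinal : HasSum (fun k : ℕ => c k * w ^ k) (-(1/w)) := by
      have h3 := hHasSum.mul_left (2 * (π:ℂ) * Complex.I)⁻¹
      have hv : (2 * (π:ℂ) * Complex.I)⁻¹ * -(2 * (π:ℂ) * Complex.I * w⁻¹) = -(1/w) := by
        field_simp
      rw [hv] at h3
      have h6 : (fun k : ℕ => (2 * (π:ℂ) * Complex.I)⁻¹ *
          ((∮ z in C(0,1), B z * G z * z ^ k) * w ^ k)) = fun k => c k * w ^ k := by
        funext k; rw [hck k]; ring
      rwa [h6] at h3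
    exact ⟨hfinal.summable, hfinal.tsum_eq⟩
  · intro k
    set u : ℝ → ℂ := fun θ => circleMap 0 1 θ *
      (B (circleMap 0 1 θ) * G (circleMap 0 1 θ) * circleMap 0 1 θ ^ k) with hu
    have hucont : Continuous u := by
      rw [hu]
      exact (continuous_circleMap 0 1).mul
        ((hcont.mul ((continuous_circleMap 0 1).pow k)))
    have hint : (∮ z in C(0,1), B z * G z * z ^ k)
        = Complex.I * ∫ θ in (0:ℝ)..2*π, u θ := by
      simp only [circleIntegral, deriv_circleMap, smul_eq_mul]
      rw [← intervalIntegral.integral_const_mul]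
      congr 1
      funext θ
      simp only [hu]
      ring
    have hBconj : ∀ z, (starRingEnd ℂ) (B z) = B ((starRingEnd ℂ) z) := by
      intro z
      rw [hB]
      simp only [map_prod, map_div₀, map_mul, map_sub, map_one, Complex.conj_ofReal]
    have hGconj : ∀ z, (starRingEnd ℂ) (G z) = G ((starRingEnd ℂ) z) := by
      intro z
      rw [hG]
      simp only [map_add, map_sub, map_mul, map_div₀, map_inv₀, map_pow, map_one,
        map_natCast]
    have hcm : ∀ θ : ℝ, (starRingEnd ℂ) (circleMap 0 1 θ) = circleMap 0 1 (-θ) := by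
      intro θ
      simp only [circleMap, zero_add, one_mul, Complex.ofReal_one, Complex.ofReal_neg]
      rw [← Complex.exp_conj]
      simp [Complex.conj_I, mul_neg, neg_mul, Complex.conj_ofReal]
    have hconj : ∀ θ : ℝ, (starRingEnd ℂ) (u θ) = u (-θ) := by
      intro θ
      simp only [hu, map_mul, map_pow, hcm, hBconj, hGconj]
    have hper : Function.Periodic u (2*π) := by
      intro θ
      simp only [hu, (periodic_circleMap 0 1) θ]
    have hIconj : (starRingEnd ℂ) (∫ θ in (0:ℝ)..2*π, u θ) = ∫ θ in (0:ℝ)..2*π, u θ := by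
      have h1 : (starRingEnd ℂ) (∫ θ in (0:ℝ)..2*π, u θ)
          = ∫ θ in (0:ℝ)..2*π, (starRingEnd ℂ) (u θ) := by
        have hui : IntervalIntegrable u MeasureTheory.volume 0 (2*π) :=
          hucont.intervalIntegrable 0 (2*π)
        have h2 := (Complex.conjCLE.toContinuousLinearMap).intervalIntegral_comp_comm hui
        simpa using h2.symm
      rw [h1]
      rw [intervalIntegral.integral_congr (g := fun θ => u (-θ)) (fun θ _ => hconj θ)]
      rw [intervalIntegral.integral_comp_neg]
      have h3 := hper.intervalIntegral_add_eq (-(2*π)) 0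
      simp only [neg_add_cancel, zero_add] at h3
      rw [show -(2*π) = -(2*π) from rfl] at h3
      simpa [neg_zero] using h3
    have him : (∫ θ in (0:ℝ)..2*π, u θ).im = 0 := by
      have h4 := Complex.conj_eq_iff_im.mp hIconj
      exact h4
    rw [hck k, hint]
    set X : ℂ := ∫ θ in (0:ℝ)..2*π, u θ with hX
    have h5 : (2 * (π:ℂ) * Complex.I)⁻¹ * (Complex.I * X)
        = (((2*π)⁻¹ : ℝ) : ℂ) * X := by
      have h6 : (2 * (π:ℂ) * Complex.I)⁻¹ * (Complex.I * X)
          = (Complex.I⁻¹ * Complex.I) * ((2 * (π:ℂ))⁻¹ * X) := by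
        rw [mul_inv]; ring
      rw [h6, inv_mul_cancel₀ Complex.I_ne_zero, one_mul]
      congr 1
      push_cast
      ring
    rw [h5, Complex.im_ofReal_mul, him, mul_zero]
end

section
/- Let $\rho \in \mathbb{R}$, let $f$ be a real polynomial, and define $g(x) = x f'(x) - \rho f(x)$ (also a real polynomial). If $f$ has at least $r$ roots in $(0,1]$, counted with multiplicity, then $g$ has at least $r - 1$ roots in $(0,1]$, counted with multiplicity. -/
open scoped Classical

/-!
Write `D_ρ f = x f' - ρ f`. At a root `a ≠ 0` of multiplicity `m` write `f = (x - a)^m h` with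
`h(a) ≠ 0`; then `D_ρ f = (x - a)^(m-1) q` with `q(a) = m a h(a) ≠ 0`, so the multiplicity drops by
exactly one. Since `D_ρ f = x^(ρ+1) (x^(-ρ) f)'` on `(0, ∞)`, Rolle's theorem puts a root of `D_ρ f`
strictly between any two distinct positive roots of `f`. If `f` has `k` distinct roots in `(0,1]`,
these give `k - 1` further roots of `D_ρ f` there, which makes up for the `k` lost multiplicities
up to one.
-/

open Polynomial Set Finset

namespace Multiset

variable {α : Type*} [LinearOrder α]

theorem card_le_card_add_one_of_interleaved {P Q : Multiset α}
    (hcount : ∀ x ∈ P, P.count x ≤ Q.count x + 1)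
    (hbetween : ∀ x ∈ P, ∀ y ∈ P, x < y → ∃ z ∈ Q, x < z ∧ z < y) :
    card P ≤ card Q + 1 := by
  set S := P.toFinset
  set T := Q.toFinset
  have hinterleaved : #S ≤ #(T \ S) + 1 :=
    card_le_sdiff_of_interleaved fun x hx y hy hxy _ => by
      obtain ⟨z, hzQ, hxz, hzy⟩ := hbetween x (mem_toFinset.1 hx) y (mem_toFinset.1 hy) hxy
      exact ⟨z, mem_toFinset.2 hzQ, hxz, hzy⟩
  have hnew : #(T \ S) ≤ ∑ z ∈ T \ S, Q.count z := by
    simpa using Finset.card_nsmul_le_sum (T \ S) (Q.count ·) 1 fun z hz =>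
      count_pos.2 (mem_toFinset.1 (Finset.mem_sdiff.1 hz).1)
  calc card P = ∑ x ∈ S, P.count x := (toFinset_sum_count_eq P).symm
    _ ≤ ∑ x ∈ S, (Q.count x + 1) := sum_le_sum fun x hx => hcount x (mem_toFinset.1 hx)
    _ = ∑ x ∈ S, Q.count x + #S := by rw [sum_add_distrib, card_eq_sum_ones]
    _ ≤ ∑ x ∈ S, Q.count x + (∑ z ∈ T \ S, Q.count z + 1) := by omega
    _ = ∑ x ∈ S ∪ T, Q.count x + 1 := by
      rw [← union_sdiff_self_eq_union, sum_union disjoint_sdiff, add_assoc]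
    _ = card Q + 1 := by
      rw [sum_count_eq_card fun z hz => mem_union_right S (mem_toFinset.2 hz)]

end Multiset

namespace Polynomial

section CommRing

variable {R : Type*} [CommRing R]

/-- The operator `D_ρ f = x f' - ρ f`. -/
noncomputable def eulerOp (ρ : R) (f : R[X]) : R[X] :=
  X * derivative f - C ρ * f

theorem eulerOp_mul_X_sub_C_pow_succ (ρ a : R) (h : R[X]) (k : ℕ) :
    eulerOp ρ (h * (X - C a) ^ (k + 1)) =
      (C ((k : R) + 1) * X * h + (X - C a) * eulerOp ρ h) * (X - C a) ^ k := by
  simp only [eulerOp, derivative_mul, derivative_pow, derivative_X_sub_C, Nat.add_sub_cancel,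
    Nat.cast_add, Nat.cast_one, map_add, map_one, mul_one]
  ring

end CommRing

section Domain

variable {R : Type*} [CommRing R] [IsDomain R] [CharZero R] {ρ a : R} {f : R[X]}

theorem exists_eulerOp_eq_mul_X_sub_C_pow (hf : f ≠ 0) (ha : a ≠ 0) (hroot : f.IsRoot a) :
    ∃ q : R[X], eulerOp ρ f = q * (X - C a) ^ (f.rootMultiplicity a - 1) ∧ ¬ q.IsRoot a := by
  obtain ⟨k, hk⟩ : ∃ k, f.rootMultiplicity a = k + 1 :=
    Nat.exists_eq_add_one.2 ((rootMultiplicity_pos hf).2 hroot)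
  set h := f /ₘ (X - C a) ^ f.rootMultiplicity a
  have hfh : f = h * (X - C a) ^ (k + 1) := by
    rw [← hk, mul_comm]; exact (pow_mul_divByMonic_rootMultiplicity_eq f a).symm
  refine ⟨C ((k : R) + 1) * X * h + (X - C a) * eulerOp ρ h, ?_, ?_⟩
  · rw [hk, Nat.add_sub_cancel, hfh, eulerOp_mul_X_sub_C_pow_succ]
  · have hh : h.eval a ≠ 0 := eval_divByMonic_pow_rootMultiplicity_ne_zero a hf
    simpa [IsRoot] using ⟨⟨Nat.cast_add_one_ne_zero k, ha⟩, hh⟩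

theorem eulerOp_ne_zero (hf : f ≠ 0) (ha : a ≠ 0) (hroot : f.IsRoot a) : eulerOp ρ f ≠ 0 := by
  obtain ⟨q, hq, hqa⟩ := exists_eulerOp_eq_mul_X_sub_C_pow (ρ := ρ) hf ha hroot
  have hq0 : q ≠ 0 := by rintro rfl; simp at hqa
  rw [hq]
  exact mul_ne_zero hq0 (pow_ne_zero _ (X_sub_C_ne_zero a))

theorem rootMultiplicity_eulerOp (hf : f ≠ 0) (ha : a ≠ 0) (hroot : f.IsRoot a) :
    (eulerOp ρ f).rootMultiplicity a = f.rootMultiplicity a - 1 := by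
  obtain ⟨q, hq, hqa⟩ := exists_eulerOp_eq_mul_X_sub_C_pow (ρ := ρ) hf ha hroot
  have hq0 : q ≠ 0 := by rintro rfl; simp at hqa
  rw [hq, rootMultiplicity_mul_X_sub_C_pow hq0,
    rootMultiplicity_eq_zero hqa, zero_add]

end Domain

theorem hasDerivAt_rpow_neg_mul_eval (ρ : ℝ) (f : ℝ[X]) {z : ℝ} (hz : 0 < z) :
    HasDerivAt (fun t => t ^ (-ρ) * f.eval t) (z ^ (-ρ - 1) * (eulerOp ρ f).eval z) z := by
  refine ((Real.hasDerivAt_rpow_const (p := -ρ) (Or.inl hz.ne')).mul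
    (f.hasDerivAt z)).congr_deriv ?_
  rw [show -ρ = -ρ - 1 + 1 by ring, Real.rpow_add_one hz.ne', add_sub_cancel_right]
  simp only [eulerOp, eval_sub, eval_mul, eval_X, eval_C]
  ring

theorem exists_isRoot_eulerOp_mem_Ioo (ρ : ℝ) {f : ℝ[X]} {x y : ℝ} (hx : 0 < x) (hxy : x < y)
    (hfx : f.IsRoot x) (hfy : f.IsRoot y) : ∃ z ∈ Ioo x y, (eulerOp ρ f).IsRoot z := by
  have hpos : ∀ t ∈ Icc x y, 0 < t := fun t ht => hx.trans_le ht.1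
  have hcont : ContinuousOn (fun t => t ^ (-ρ) * f.eval t) (Icc x y) :=
    (continuousOn_id.rpow_const fun t ht => Or.inl (hpos t ht).ne').mul
      f.continuous.continuousOn
  obtain ⟨z, hz, hderiv⟩ := exists_hasDerivAt_eq_zero hxy hcont (by simp [hfx.eq_zero, hfy.eq_zero])
    fun z hz => hasDerivAt_rpow_neg_mul_eval ρ f (hpos z (Ioo_subset_Icc_self hz))
  have hz0 : 0 < z := hpos z (Ioo_subset_Icc_self hz)
  exact ⟨z, hz, (mul_eq_zero.1 hderiv).resolve_left (Real.rpow_pos_of_pos hz0 _).ne'⟩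

theorem card_roots_filter_le_card_roots_eulerOp_filter_add_one (ρ : ℝ) (f : ℝ[X]) {s : Set ℝ}
    [DecidablePred (· ∈ s)] [s.OrdConnected] (hs : s ⊆ Ioi 0) :
    Multiset.card (f.roots.filter (· ∈ s)) ≤
      Multiset.card ((eulerOp ρ f).roots.filter (· ∈ s)) + 1 := by
  have hroot : ∀ {x}, x ∈ f.roots.filter (· ∈ s) → f ≠ 0 ∧ f.IsRoot x ∧ x ∈ s := fun hx => by
    rw [Multiset.mem_filter, mem_roots'] at hx
    exact ⟨hx.1.1, hx.1.2, hx.2⟩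
  refine Multiset.card_le_card_add_one_of_interleaved (fun x hx => ?_) fun x hx y hy hxy => ?_
  · obtain ⟨hf, hfx, hxs⟩ := hroot hx
    rw [Multiset.count_filter_of_pos hxs, Multiset.count_filter_of_pos hxs, count_roots,
      count_roots, rootMultiplicity_eulerOp hf (hs hxs).ne' hfx]
    omega
  · obtain ⟨hf, hfx, hxs⟩ := hroot hx
    obtain ⟨-, hfy, hys⟩ := hroot hy
    obtain ⟨z, hz, hgz⟩ := exists_isRoot_eulerOp_mem_Ioo ρ (hs hxs) hxy hfx hfy
    refine ⟨z, Multiset.mem_filter.2 ⟨mem_roots'.2 ⟨?_, hgz⟩, ?_⟩, hz⟩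
    · exact eulerOp_ne_zero hf (hs hxs).ne' hfx
    · exact ‹s.OrdConnected›.out hxs hys (Ioo_subset_Icc_self hz)

end Polynomial

/-- If `f` has at least `r` roots in `(0,1]` counted with multiplicity, then
`g(x) = x f'(x) - ρ f(x)` has at least `r - 1` roots in `(0,1]` counted with
multiplicity. -/
theorem root_count_after_D
    (ρ : ℝ) (f : Polynomial ℝ) (r : ℕ)
    (hf : r ≤ ((f.roots.filter fun x => x ∈ Set.Ioc (0 : ℝ) 1)).card) :
    r - 1 ≤
      (((Polynomial.X * f.derivative - Polynomial.C ρ * f).roots.filter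
        fun x => x ∈ Set.Ioc (0 : ℝ) 1)).card := by
  have := card_roots_filter_le_card_roots_eulerOp_filter_add_one ρ f (s := Ioc 0 1) Ioc_subset_Ioi_self
  unfold eulerOp at this
  omega
end

section
/- For every $A > 0$ there exists $v \in \mathbb{N}$ such that for every $n \in \mathbb{N}$ there exists a real polynomial $q$ of degree $v \lceil \sqrt{n} \rceil$ all of whose roots are real, with $q(0) = 1$ and $\sum_{k=1}^n |q(k)| < \frac{1}{A}$. -/
/-!
The normalized Dirichlet kernel `q₀ = (2ℓ+1)⁻¹ (1 + 2 ∑_{k=1}^ℓ T_k)` satisfies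
`q₀(cos 2θ) · (2ℓ+1) sin θ = sin((2ℓ+1)θ)`. Hence `q₀(1) = 1`, `q₀` has the `ℓ` distinct real roots
`cos (2jπ/(2ℓ+1))`, and `q₀(x)² (2ℓ+1)² (1 - x) ≤ 2` on `[-1, 1]`. For `q₁(t) = q₀(1 - 2t/n)` and
`ℓ² ≥ n` this gives `q₁(k)² ≤ 1/(4k)` for `1 ≤ k ≤ n`, so with `m ≥ 2` the terms of
`∑ |q₁(k)|^{2m}` are at most `4^{-m}/k²` and the sum is at most `2 · 4^{-m}`, which is below `1/A`
once `m = ⌈A⌉ + 2`.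
-/

open Polynomial Real Finset

theorem one_add_two_mul_sum_cos_mul_sin (ℓ : ℕ) (θ : ℝ) :
    (1 + 2 * ∑ k ∈ Icc 1 ℓ, cos (k * (2 * θ))) * sin θ = sin ((2 * ℓ + 1) * θ) := by
  induction ℓ with
  | zero => simp
  | succ ℓ ih =>
    rw [sum_Icc_succ_top (by omega), mul_add, ← add_assoc, add_mul, ih]
    have h₁ : (2 * ((ℓ + 1 : ℕ) : ℝ) + 1) * θ = (ℓ + 1 : ℕ) * (2 * θ) + θ := by push_cast; ring
    have h₂ : (2 * (ℓ : ℝ) + 1) * θ = (ℓ + 1 : ℕ) * (2 * θ) - θ := by push_cast; ring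
    rw [h₁, h₂, sin_add, sin_sub]
    ring

noncomputable def dirichletPoly (ℓ : ℕ) : ℝ[X] :=
  C (2 * ℓ + 1 : ℝ)⁻¹ * (1 + 2 * ∑ k ∈ Icc 1 ℓ, Chebyshev.T ℝ k)

section dirichletPoly

variable (ℓ : ℕ)

theorem dirichletPoly_eval_one : (dirichletPoly ℓ).eval 1 = 1 := by
  simp only [dirichletPoly, eval_mul, eval_C, eval_add, eval_one, eval_ofNat, eval_finsetSum,
    Chebyshev.T_eval_one, sum_const, Nat.card_Icc, add_tsub_cancel_right, nsmul_eq_mul, mul_one]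
  field_simp
  ring

theorem dirichletPoly_eval_cos_two_mul_mul_sin (θ : ℝ) :
    (dirichletPoly ℓ).eval (cos (2 * θ)) * ((2 * ℓ + 1) * sin θ) = sin ((2 * ℓ + 1) * θ) := by
  rw [← one_add_two_mul_sum_cos_mul_sin]
  simp only [dirichletPoly, eval_mul, eval_C, eval_add, eval_one, eval_ofNat, eval_finsetSum,
    Chebyshev.T_real_cos, Int.cast_natCast]
  rw [mul_mul_mul_comm, inv_mul_cancel₀ (by positivity), one_mul]

theorem natDegree_dirichletPoly_le : (dirichletPoly ℓ).natDegree ≤ ℓ := by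
  refine (natDegree_C_mul_le _ _).trans (natDegree_add_le_of_degree_le (by simp) ?_)
  refine natDegree_mul_le.trans ?_
  rw [natDegree_ofNat, zero_add]
  refine natDegree_sum_le_of_forall_le _ _ fun k hk ↦ ?_
  rw [Chebyshev.natDegree_T, Int.natAbs_natCast]
  exact (mem_Icc.mp hk).2

theorem dirichletPoly_isRoot {j : ℕ} (hj : j ∈ Icc 1 ℓ) :
    (dirichletPoly ℓ).IsRoot (cos (2 * (j * π / (2 * ℓ + 1)))) := by
  obtain ⟨hj₁, hjℓ⟩ := mem_Icc.mp hj
  have hθ : 0 < j * π / (2 * ℓ + 1) := by positivity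
  have hθπ : j * π / (2 * ℓ + 1) < π := by
    rw [div_lt_iff₀ (by positivity)]
    have : (j : ℝ) ≤ ℓ := by exact_mod_cast hjℓ
    nlinarith [pi_pos]
  have h := dirichletPoly_eval_cos_two_mul_mul_sin ℓ (j * π / (2 * ℓ + 1))
  rw [mul_div_cancel₀ _ (by positivity), sin_nat_mul_pi] at h
  exact (mul_eq_zero.mp h).resolve_right
    (mul_ne_zero (by positivity) (sin_pos_of_pos_of_lt_pi hθ hθπ).ne')

theorem card_roots_dirichletPoly : (dirichletPoly ℓ).roots.card = ℓ := by
  set S := (Icc 1 ℓ).image fun j : ℕ ↦ cos (2 * (j * π / (2 * ℓ + 1)))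
  have hS : #S = ℓ := by
    rw [card_image_of_injOn, Nat.card_Icc, Nat.add_sub_cancel]
    refine injOn_cos.comp (fun i _ j _ h ↦ ?_) fun j hj ↦ ?_
    · field_simp at h
      exact_mod_cast h
    · have hjℓ : (j : ℝ) ≤ ℓ := by exact_mod_cast (mem_Icc.mp hj).2
      refine ⟨by positivity, ?_⟩
      rw [← mul_div_assoc, div_le_iff₀ (by positivity)]
      nlinarith [pi_pos]
  have hne : dirichletPoly ℓ ≠ 0 := fun h ↦ by simpa [h] using dirichletPoly_eval_one ℓ
  have hroots : (dirichletPoly ℓ).roots = S.val := by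
    refine roots_eq_of_natDegree_le_card_of_ne_zero (fun x hx ↦ ?_) ?_ hne
    · obtain ⟨j, hj, rfl⟩ := mem_image.mp hx
      exact dirichletPoly_isRoot ℓ hj
    · exact (natDegree_dirichletPoly_le ℓ).trans hS.ge
  rw [hroots, card_val, hS]

theorem natDegree_dirichletPoly : (dirichletPoly ℓ).natDegree = ℓ :=
  (natDegree_dirichletPoly_le ℓ).antisymm ((card_roots_dirichletPoly ℓ).ge.trans (card_roots' _))

theorem sq_dirichletPoly_eval_mul_le {x : ℝ} (hx₁ : -1 ≤ x) (hx₂ : x ≤ 1) :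
    (dirichletPoly ℓ).eval x ^ 2 * (2 * ℓ + 1) ^ 2 * (1 - x) ≤ 2 := by
  set θ := arccos x / 2
  have hx : cos (2 * θ) = x := by rw [mul_div_cancel₀ _ two_ne_zero, cos_arccos hx₁ hx₂]
  have h₁ : 1 - x = 2 * sin θ ^ 2 := by
    rw [← hx, cos_two_mul]
    linarith [sin_sq_add_cos_sq θ]
  have h₂ := congrArg (· ^ 2) (dirichletPoly_eval_cos_two_mul_mul_sin ℓ θ)
  simp only [hx] at h₂
  rw [h₁]
  nlinarith [sin_sq_le_one ((2 * ℓ + 1) * θ)]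

end dirichletPoly

noncomputable def rescaledDirichletPoly (ℓ n : ℕ) : ℝ[X] :=
  (dirichletPoly ℓ).comp (C (-2 / n : ℝ) * X + C 1)

section rescaledDirichletPoly

variable {ℓ n : ℕ}

theorem rescaledDirichletPoly_eval (t : ℝ) :
    (rescaledDirichletPoly ℓ n).eval t = (dirichletPoly ℓ).eval (-2 / n * t + 1) := by
  simp [rescaledDirichletPoly, eval_comp]

theorem rescaledDirichletPoly_eval_zero : (rescaledDirichletPoly ℓ n).eval 0 = 1 := by
  simp [rescaledDirichletPoly_eval, dirichletPoly_eval_one]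

theorem natDegree_rescaledDirichletPoly (hn : n ≠ 0) :
    (rescaledDirichletPoly ℓ n).natDegree = ℓ := by
  rw [rescaledDirichletPoly, natDegree_comp, natDegree_dirichletPoly,
    natDegree_linear (by simpa using hn), mul_one]

theorem card_roots_rescaledDirichletPoly (hn : n ≠ 0) :
    (rescaledDirichletPoly ℓ n).roots.card = ℓ := by
  rw [rescaledDirichletPoly, roots_comp_C_mul_X_add_C _ _ _ (by simpa using hn),
    Multiset.card_map, card_roots_dirichletPoly]

theorem sq_rescaledDirichletPoly_eval_le {k : ℕ} (hk : 1 ≤ k) (hkn : k ≤ n) (hℓ : n ≤ ℓ ^ 2) :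
    (rescaledDirichletPoly ℓ n).eval (k : ℝ) ^ 2 ≤ (4 * (k : ℝ))⁻¹ := by
  have hk₀ : (0 : ℝ) < k := by exact_mod_cast hk
  have hn₀ : (0 : ℝ) < n := by exact_mod_cast hk.trans hkn
  have hu : (k : ℝ) / n ≤ 1 := div_le_one_of_le₀ (by exact_mod_cast hkn) hn₀.le
  have hx : -2 / n * (k : ℝ) + 1 = 1 - 2 * (k / n) := by ring
  have h := sq_dirichletPoly_eval_mul_le ℓ (x := 1 - 2 * (k / n)) (by linarith)
    (sub_le_self _ (by positivity))
  rw [← hx, ← rescaledDirichletPoly_eval, hx, sub_sub_cancel] at h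
  set e := (rescaledDirichletPoly ℓ n).eval (k : ℝ)
  have hD : e ^ 2 * (2 * ℓ + 1) ^ 2 * k / n ≤ 1 := by
    rw [mul_div_assoc]
    linarith
  rw [div_le_one hn₀] at hD
  have hℓ' : (n : ℝ) ≤ ℓ ^ 2 := by exact_mod_cast hℓ
  have h4 : e ^ 2 * (4 * k) * ℓ ^ 2 ≤ 1 * ℓ ^ 2 :=
    calc e ^ 2 * (4 * k) * ℓ ^ 2 = e ^ 2 * k * (2 * ℓ) ^ 2 := by ring
      _ ≤ e ^ 2 * k * (2 * ℓ + 1) ^ 2 := by gcongr; linarith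
      _ ≤ n := by linarith
      _ ≤ 1 * ℓ ^ 2 := by rw [one_mul]; exact hℓ'
  rw [← one_div, le_div_iff₀ (by positivity)]
  exact le_of_mul_le_mul_right h4 (hn₀.trans_le hℓ')

end rescaledDirichletPoly

theorem sum_pow_le_of_le_inv {a : ℕ → ℝ} {n m : ℕ} (hm : 2 ≤ m)
    (ha₀ : ∀ k ∈ Icc 1 n, 0 ≤ a k) (ha : ∀ k ∈ Icc 1 n, a k ≤ (4 * (k : ℝ))⁻¹) :
    ∑ k ∈ Icc 1 n, a k ^ m ≤ 2 / (4 : ℝ) ^ m := by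
  have hterm : ∀ k ∈ Icc 1 n, a k ^ m ≤ ((4 : ℝ) ^ m)⁻¹ * ((k : ℝ) ^ 2)⁻¹ := by
    intro k hk
    have hk₁ : (1 : ℝ) ≤ k := by exact_mod_cast (mem_Icc.mp hk).1
    calc a k ^ m ≤ ((4 * (k : ℝ))⁻¹) ^ m := pow_le_pow_left₀ (ha₀ k hk) (ha k hk) m
      _ = ((4 : ℝ) ^ m)⁻¹ * ((k : ℝ) ^ m)⁻¹ := by rw [inv_pow, mul_pow, mul_inv]
      _ ≤ ((4 : ℝ) ^ m)⁻¹ * ((k : ℝ) ^ 2)⁻¹ := by gcongr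
  have hIcc : Icc 1 n = Ioo 0 (n + 1) := by ext; simp only [mem_Icc, mem_Ioo]; omega
  calc ∑ k ∈ Icc 1 n, a k ^ m ≤ ∑ k ∈ Icc 1 n, ((4 : ℝ) ^ m)⁻¹ * ((k : ℝ) ^ 2)⁻¹ := sum_le_sum hterm
    _ = ((4 : ℝ) ^ m)⁻¹ * ∑ k ∈ Ioo 0 (n + 1), ((k : ℝ) ^ 2)⁻¹ := by rw [← mul_sum, hIcc]
    _ ≤ ((4 : ℝ) ^ m)⁻¹ * 2 := by gcongr; simpa using sum_Ioo_inv_sq_le (α := ℝ) 0 (n + 1)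
    _ = 2 / 4 ^ m := by ring

/-- For every `A > 0` there is `v ∈ ℕ` such that for every `n` there is a real
polynomial `q` of degree `v ⌈√n⌉` with all roots real, `q(0) = 1`, and
`∑_{k=1}^n |q(k)| < 1/A`. -/
theorem auxiliary_polynomial (A : ℝ) (hA : 0 < A) :
    ∃ v : ℕ, 0 < v ∧ ∀ n : ℕ,
      ∃ q : Polynomial ℝ,
        q.natDegree = v * ⌈Real.sqrt n⌉₊ ∧
        q.roots.card = q.natDegree ∧
        q.eval 0 = 1 ∧
        (∑ k ∈ Finset.Icc 1 n, |q.eval (k : ℝ)|) < 1 / A := by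
  set m := ⌈A⌉₊ + 2
  have hAm : 2 * A < 4 ^ m := by
    have hc : (⌈A⌉₊ : ℝ) < 4 ^ ⌈A⌉₊ := by exact_mod_cast Nat.lt_pow_self (by norm_num)
    have := Nat.le_ceil A
    rw [pow_add]
    linarith
  refine ⟨2 * m, by omega, fun n ↦ ?_⟩
  rcases Nat.eq_zero_or_pos n with rfl | hn
  · exact ⟨1, by simp, by simp, by simp, by simpa using hA⟩
  set ℓ := ⌈√(n : ℝ)⌉₊
  have hℓ : n ≤ ℓ ^ 2 := by
    have := (Real.sqrt_le_left (by positivity)).mp (Nat.le_ceil √(n : ℝ))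
    exact_mod_cast this
  set q := rescaledDirichletPoly ℓ n
  refine ⟨q ^ (2 * m), ?_, ?_, ?_, ?_⟩
  · rw [natDegree_pow, natDegree_rescaledDirichletPoly hn.ne']
  · rw [roots_pow, Multiset.card_nsmul, card_roots_rescaledDirichletPoly hn.ne', natDegree_pow,
      natDegree_rescaledDirichletPoly hn.ne']
  · rw [eval_pow, rescaledDirichletPoly_eval_zero, one_pow]
  calc ∑ k ∈ Icc 1 n, |(q ^ (2 * m)).eval (k : ℝ)| = ∑ k ∈ Icc 1 n, (q.eval (k : ℝ) ^ 2) ^ m := by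
        simp only [eval_pow, pow_mul, abs_pow, sq_abs]
    _ ≤ 2 / 4 ^ m := sum_pow_le_of_le_inv (by omega) (fun _ _ ↦ sq_nonneg _)
        fun k hk ↦ sq_rescaledDirichletPoly_eval_le (mem_Icc.mp hk).1 (mem_Icc.mp hk).2 hℓ
    _ < 1 / A := by rw [div_lt_div_iff₀ (by positivity) hA]; linarith
end

section
/- For every $\ell \in \mathbb{N}$ there exists a real polynomial $q_0$ of degree $\ell$ such that: (i) $q_0(\cos y) = \frac{1}{2\ell+1}\Big(1 + 2\sum_{k=1}^\ell \cos(k y)\Big)$ for all $y \in \mathbb{R}$; (ii) all $\ell$ roots of $q_0$ lie in $[-1, 1]$; (iii) $q_0(1) = 1$; and (iv) $|q_0(t)| \le \frac{1}{2\ell+1}\sqrt{\frac{2}{1-t}}$ for all $t \in [-1, 1)$. -/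
open Polynomial Real

lemma T_natDegree_le (n : ℕ) : (Chebyshev.T ℝ n).natDegree ≤ n := by
  induction n using Nat.strong_induction_on with
  | _ n ih =>
    match n with
    | 0 => simp [Chebyshev.T_zero]
    | 1 => simp [Chebyshev.T_one, natDegree_X_le]
    | (n+2) =>
      have h : ((n:ℤ)+2) = ((n+2 : ℕ) : ℤ) := by push_cast; ring
      rw [show ((n+2:ℕ):ℤ) = (n:ℤ) + 2 by push_cast; ring, Chebyshev.T_add_two]
      refine le_trans (natDegree_sub_le _ _) (max_le ?_ ?_)
      · refine le_trans (natDegree_mul_le) ?_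
        have h1 : ((2:ℝ[X]) * X).natDegree ≤ 1 := by
          refine le_trans natDegree_mul_le ?_
          simp [natDegree_X_le]
        have h2 := ih (n+1) (by omega)
        rw [show ((n:ℤ)+1) = ((n+1:ℕ):ℤ) by push_cast; ring]
        omega
      · exact le_trans (ih n (by omega)) (by omega)

lemma T_coeff_self (n : ℕ) : (Chebyshev.T ℝ n).coeff n = 2^(n-1) := by
  induction n using Nat.strong_induction_on with
  | _ n ih =>
    match n with
    | 0 => simp [Chebyshev.T_zero]
    | 1 => simp [Chebyshev.T_one]
    | (n+2) =>
      rw [show ((n+2:ℕ):ℤ) = (n:ℤ) + 2 by push_cast; ring, Chebyshev.T_add_two]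
      have hz : (Chebyshev.T ℝ n).coeff (n+2) = 0 := by
        refine coeff_eq_zero_of_natDegree_lt (lt_of_le_of_lt (T_natDegree_le n) (by omega))
      have h1 : ((2:ℝ[X]) * X * Chebyshev.T ℝ ((n:ℤ)+1)).coeff (n+2)
          = 2 * (Chebyshev.T ℝ ((n:ℤ)+1)).coeff (n+1) := by
        rw [mul_assoc, show ((2:ℝ[X]) = C 2) from (map_ofNat C 2).symm, coeff_C_mul, coeff_X_mul]
      have h2 := ih (n+1) (by omega)
      rw [coeff_sub, h1, hz, show ((n:ℤ)+1) = ((n+1:ℕ):ℤ) by push_cast; ring, h2]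
      simp
      ring

lemma dirich (ℓ : ℕ) (y : ℝ) :
    Real.sin (y/2) * (1 + 2 * ∑ k ∈ Finset.Icc 1 ℓ, Real.cos (k*y))
      = Real.sin ((ℓ + 1/2) * y) := by
  induction ℓ with
  | zero => simp; ring_nf
  | succ n ih =>
    rw [Finset.sum_Icc_succ_top (by omega)]
    have key : Real.sin (((n:ℝ)+1+1/2)*y) - Real.sin (((n:ℝ)+1/2)*y)
        = 2 * Real.sin (y/2) * Real.cos (((n:ℝ)+1) * y) := by
      rw [Real.sin_sub_sin]
      ring_nf
    push_cast
    linear_combination ih - key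


/-- For every `ℓ` there is a real polynomial `q₀` of degree `ℓ` with
(i) `q₀(cos y) = (1/(2ℓ+1))(1 + 2∑_{k=1}^ℓ cos(ky))` for all `y`;
(ii) all `ℓ` roots of `q₀` lie in `[-1,1]`;
(iii) `q₀(1) = 1`; and (iv) `|q₀(t)| ≤ (1/(2ℓ+1))√(2/(1-t))` for `t ∈ [-1,1)`. -/
theorem dirichlet_kernel_polynomial (ℓ : ℕ) (hℓ : 0 < ℓ) :
    ∃ q₀ : Polynomial ℝ,
      q₀.natDegree = ℓ ∧
      (∀ y : ℝ, q₀.eval (Real.cos y) =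
        1 / (2 * ℓ + 1) * (1 + 2 * ∑ k ∈ Finset.Icc 1 ℓ, Real.cos (k * y))) ∧
      (q₀.roots.card = ℓ ∧ ∀ x ∈ q₀.roots, x ∈ Set.Icc (-1 : ℝ) 1) ∧
      q₀.eval 1 = 1 ∧
      ∀ t ∈ Set.Ico (-1 : ℝ) 1,
        |q₀.eval t| ≤ 1 / (2 * ℓ + 1) * Real.sqrt (2 / (1 - t)) := by
  have hcpos : (0:ℝ) < 1 / (2*ℓ+1) := by positivity
  set p : ℝ[X] := 1 + C 2 * ∑ k ∈ Finset.Icc 1 ℓ, Chebyshev.T ℝ k with hp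
  set q₀ : ℝ[X] := C (1/(2*(ℓ:ℝ)+1)) * p with hq
  -- (i)
  have hi : ∀ y : ℝ, q₀.eval (Real.cos y) =
      1 / (2 * ℓ + 1) * (1 + 2 * ∑ k ∈ Finset.Icc 1 ℓ, Real.cos (k * y)) := by
    intro y
    have hT : ∀ k ∈ Finset.Icc 1 ℓ,
        (Chebyshev.T ℝ k).eval (Real.cos y) = Real.cos (k * y) := by
      intro k _
      rw [Chebyshev.T_real_cos]
      norm_num
    rw [hq, hp]
    simp only [eval_mul, eval_C, eval_add, eval_one, eval_finset_sum]
    rw [Finset.sum_congr rfl hT]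
  -- coefficient of X^ℓ in p
  have hcoeff : p.coeff ℓ = 2^ℓ := by
    rw [hp, coeff_add, coeff_C_mul, finset_sum_coeff]
    rw [Finset.sum_eq_single ℓ]
    · rw [coeff_one, if_neg (by omega), T_coeff_self]
      have h2 : ℓ - 1 + 1 = ℓ := by omega
      rw [zero_add, ← pow_succ', h2]
    · intro k hk hne
      exact coeff_eq_zero_of_natDegree_lt
        (lt_of_le_of_lt (T_natDegree_le k) (lt_of_le_of_ne (Finset.mem_Icc.1 hk).2 hne))
    · intro h
      exact absurd (Finset.mem_Icc.2 ⟨hℓ, le_refl ℓ⟩) h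
  have hple : p.natDegree ≤ ℓ := by
    rw [hp]
    refine le_trans (natDegree_add_le _ _) (max_le (by simp) ?_)
    refine le_trans natDegree_mul_le ?_
    simp only [natDegree_C, zero_add]
    exact natDegree_sum_le_of_forall_le _ _ fun k hk =>
      le_trans (T_natDegree_le k) (Finset.mem_Icc.1 hk).2
  have hpdeg : p.natDegree = ℓ :=
    le_antisymm hple (le_natDegree_of_ne_zero (by rw [hcoeff]; positivity))
  have hdeg : q₀.natDegree = ℓ := by
    rw [hq, natDegree_C_mul (by positivity : (1/(2*(ℓ:ℝ)+1)) ≠ 0), hpdeg]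
  have hq0ne : q₀ ≠ 0 := fun h => by
    rw [h] at hdeg; simp at hdeg; omega
  -- (iii)
  have hiii : q₀.eval 1 = 1 := by
    have h0 := hi 0
    simp only [Real.cos_zero, mul_zero] at h0
    rw [Finset.sum_const, Nat.card_Icc] at h0
    simp at h0
    rw [h0]
    field_simp
    ring
  -- roots
  have hd : (0:ℝ) < (ℓ:ℝ) + 1/2 := by positivity
  set r : ℕ → ℝ := fun k => Real.cos (k * π / ((ℓ:ℝ) + 1/2)) with hr
  have hymem : ∀ k ∈ Finset.Icc 1 ℓ, 0 < (k:ℝ) * π / ((ℓ:ℝ) + 1/2) ∧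
      (k:ℝ) * π / ((ℓ:ℝ) + 1/2) < π := by
    intro k hk
    obtain ⟨hk1, hk2⟩ := Finset.mem_Icc.1 hk
    constructor
    · have : (0:ℝ) < (k:ℝ) := by exact_mod_cast hk1
      positivity
    · rw [div_lt_iff₀ hd]
      have hk2' : (k:ℝ) ≤ (ℓ:ℝ) := by exact_mod_cast hk2
      nlinarith [Real.pi_pos]
  have hroot : ∀ k ∈ Finset.Icc 1 ℓ, q₀.eval (r k) = 0 := by
    intro k hk
    obtain ⟨hy0, hyπ⟩ := hymem k hk
    set yk := (k:ℝ) * π / ((ℓ:ℝ) + 1/2) with hyk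
    have hsinne : Real.sin (yk/2) ≠ 0 :=
      ne_of_gt (Real.sin_pos_of_pos_of_lt_pi (by linarith) (by linarith [Real.pi_pos]))
    have hzero : Real.sin (((ℓ:ℝ) + 1/2) * yk) = 0 := by
      rw [show ((ℓ:ℝ) + 1/2) * yk = k * π by rw [hyk]; field_simp]
      exact Real.sin_nat_mul_pi k
    have hsum : (1 + 2 * ∑ j ∈ Finset.Icc 1 ℓ, Real.cos (j * yk)) = 0 := by
      have := dirich ℓ yk
      rw [hzero] at this
      exact (mul_eq_zero.1 this).resolve_left hsinne
    rw [hr]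
    simp only []
    rw [hi yk, hsum, mul_zero]
  have hinj : Set.InjOn r (Finset.Icc 1 ℓ) := by
    intro j hj k hk hjk
    simp only [Finset.coe_Icc, Set.mem_Icc] at hj hk
    have hj' := hymem j (Finset.mem_Icc.2 hj)
    have hk' := hymem k (Finset.mem_Icc.2 hk)
    have := Real.injOn_cos (Set.mem_Icc.2 ⟨le_of_lt hj'.1, le_of_lt hj'.2⟩)
      (Set.mem_Icc.2 ⟨le_of_lt hk'.1, le_of_lt hk'.2⟩) hjk
    have hππ := Real.pi_ne_zero
    field_simp at this
    exact_mod_cast this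
  set S : Finset ℝ := (Finset.Icc 1 ℓ).image r with hS
  have hScard : S.card = ℓ := by
    rw [hS, Finset.card_image_of_injOn hinj, Nat.card_Icc]
    omega
  have hSsub : S ⊆ q₀.roots.toFinset := by
    intro x hx
    obtain ⟨k, hk, rfl⟩ := Finset.mem_image.1 hx
    rw [Multiset.mem_toFinset, mem_roots hq0ne]
    exact hroot k hk
  have hcard1 : q₀.roots.card ≤ ℓ := hdeg ▸ q₀.card_roots'
  have hcard2 : ℓ ≤ q₀.roots.toFinset.card := hScard ▸ Finset.card_le_card hSsub
  have hcard3 : q₀.roots.toFinset.card ≤ q₀.roots.card := q₀.roots.toFinset_card_le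
  have hrc : q₀.roots.card = ℓ := le_antisymm hcard1 (le_trans hcard2 hcard3)
  have hSeq : q₀.roots.toFinset = S :=
    (Finset.eq_of_subset_of_card_le hSsub (by omega)).symm
  have hmem : ∀ x ∈ q₀.roots, x ∈ Set.Icc (-1:ℝ) 1 := by
    intro x hx
    have : x ∈ S := hSeq ▸ Multiset.mem_toFinset.2 hx
    obtain ⟨k, _, rfl⟩ := Finset.mem_image.1 this
    exact ⟨Real.neg_one_le_cos _, Real.cos_le_one _⟩
  -- (iv)
  have hiv : ∀ t ∈ Set.Ico (-1:ℝ) 1,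
      |q₀.eval t| ≤ 1 / (2 * ℓ + 1) * Real.sqrt (2 / (1 - t)) := by
    intro t ht
    obtain ⟨ht1, ht2⟩ := ht
    set y := Real.arccos t with hy
    have hyc : Real.cos y = t := Real.cos_arccos ht1 (le_of_lt ht2)
    have hy0 : 0 < y := Real.arccos_pos.2 ht2
    have hyπ : y ≤ π := Real.arccos_le_pi t
    have hspos : 0 < Real.sin (y/2) :=
      Real.sin_pos_of_pos_of_lt_pi (by linarith) (by linarith [Real.pi_pos])
    have hhalf : Real.sin (y/2) = Real.sqrt ((1 - t)/2) := by
      rw [Real.sin_half_eq_sqrt (le_of_lt hy0) (by linarith [Real.pi_pos]), hyc]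
    have hkey := dirich ℓ y
    have heval : q₀.eval t = 1/(2*ℓ+1) * (Real.sin (((ℓ:ℝ) + 1/2) * y) / Real.sin (y/2)) := by
      rw [← hyc, hi y]
      rw [← hkey]
      field_simp
      simp only [mul_comm y]
    have hsqrt : Real.sqrt (2/(1-t)) = (Real.sin (y/2))⁻¹ := by
      rw [hhalf, show (2:ℝ)/(1-t) = ((1-t)/2)⁻¹ by field_simp, Real.sqrt_inv]
    rw [heval, abs_mul, abs_of_pos hcpos, hsqrt]
    refine mul_le_mul_of_nonneg_left ?_ (le_of_lt hcpos)
    rw [abs_div, abs_of_pos hspos, div_le_iff₀ hspos, inv_mul_cancel₀ (ne_of_gt hspos)]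
    exact Real.abs_sin_le_one _
  exact ⟨q₀, hdeg, hi, ⟨hrc, hmem⟩, hiii, hiv⟩
end

section
/- Let $A > 0$, $n \in \mathbb{N}$, and $\varepsilon_1, \dots, \varepsilon_n \in [-A, A]$, and set $P_n(x) = 1 + \sum_{k=1}^n \varepsilon_k x^k$. Suppose $q$ is a real polynomial of degree $m$ all of whose roots are real, with $q(0) = 1$ and $\sum_{k=1}^n |q(k)| < \frac{1}{A}$. Then $P_n$ has at most $m$ roots in $(0,1]$, counted with multiplicity. -/
open scoped Classical

open Polynomial Set


open Polynomial Set

noncomputable def Dop (ρ : ℝ) (f : ℝ[X]) : ℝ[X] := X * derivative f - C ρ * f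

lemma Dop_eval_zero (ρ : ℝ) (f : ℝ[X]) : (Dop ρ f).eval 0 = -ρ * f.eval 0 := by
  simp [Dop]

lemma rolle_step (f : ℝ[X]) (ρ : ℝ) {x y : ℝ} (hx : 0 < x) (hxy : x < y)
    (hfx : f.eval x = 0) (hfy : f.eval y = 0) :
    ∃ z ∈ Set.Ioo x y, (Dop ρ f).eval z = 0 := by
  set g : ℝ → ℝ := fun t => f.eval t * Real.exp (-ρ * Real.log t) with hg
  have hderiv : ∀ t : ℝ, 0 < t → HasDerivAt g
      (Real.exp (-ρ * Real.log t) / t * ((Dop ρ f).eval t)) t := by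
    intro t ht0
    have h1 : HasDerivAt (fun t => f.eval t) (f.derivative.eval t) t := f.hasDerivAt t
    have hl : HasDerivAt Real.log t⁻¹ t := Real.hasDerivAt_log ht0.ne'
    have h2 := ((hl.const_mul (-ρ)).exp)
    have h3 : HasDerivAt g _ t := h1.mul h2
    convert h3 using 1
    simp only [Dop, eval_sub, eval_mul, eval_X, eval_C]
    field_simp
    ring
  have hcont : ContinuousOn g (Set.Icc x y) := fun t ht =>
    ((hderiv t (hx.trans_le ht.1)).continuousAt).continuousWithinAt
  obtain ⟨c, hc, hc0⟩ := exists_hasDerivAt_eq_zero hxy hcont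
    (by simp [hg, hfx, hfy]) (fun t ht => hderiv t (hx.trans ht.1))
  refine ⟨c, hc, ?_⟩
  have hcpos : 0 < c := hx.trans hc.1
  have hne : Real.exp (-ρ * Real.log c) / c ≠ 0 :=
    div_ne_zero (Real.exp_ne_zero _) hcpos.ne'
  exact (mul_eq_zero.1 hc0).resolve_left hne

lemma mult_le (f : ℝ[X]) (ρ x : ℝ) (h : Dop ρ f ≠ 0) :
    f.rootMultiplicity x - 1 ≤ (Dop ρ f).rootMultiplicity x := by
  rw [Polynomial.le_rootMultiplicity_iff h]
  have h1 : (X - C x) ^ (f.rootMultiplicity x - 1) ∣ f :=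
    (pow_dvd_pow _ (Nat.sub_le _ _)).trans (f.pow_rootMultiplicity_dvd x)
  have h2 : (X - C x) ^ (f.rootMultiplicity x - 1) ∣ derivative f :=
    (pow_dvd_pow _ (f.rootMultiplicity_sub_one_le_derivative_rootMultiplicity x)).trans
      ((derivative f).pow_rootMultiplicity_dvd x)
  exact dvd_sub (h2.mul_left X) (h1.mul_left (C ρ))

lemma sum_count_le {α : Type*} [DecidableEq α] (u : Finset α) (s : Multiset α) :
    (∑ x ∈ u, s.count x) ≤ Multiset.card s := by
  calc ∑ x ∈ u, s.count x = ∑ x ∈ u ∩ s.toFinset, s.count x := by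
        refine (Finset.sum_subset Finset.inter_subset_left ?_).symm
        intro x hxu hx
        rw [Finset.mem_inter] at hx
        have hns : x ∉ s.toFinset := fun h => hx ⟨hxu, h⟩
        rw [Multiset.mem_toFinset] at hns
        simp [Multiset.count_eq_zero.2 hns]
    _ ≤ ∑ x ∈ s.toFinset, s.count x := Finset.sum_le_sum_of_subset Finset.inter_subset_right
    _ = Multiset.card s := Multiset.toFinset_sum_count_eq s

lemma card_step (f : ℝ[X]) (ρ : ℝ) (h : Dop ρ f ≠ 0) :
    (f.roots.filter fun x => x ∈ Set.Ioc (0:ℝ) 1).card ≤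
    ((Dop ρ f).roots.filter fun x => x ∈ Set.Ioc (0:ℝ) 1).card + 1 := by
  classical
  have hf : f ≠ 0 := by rintro rfl; simp [Dop] at h
  set R := f.roots.filter (fun x => x ∈ Set.Ioc (0:ℝ) 1) with hR
  set R' := (Dop ρ f).roots.filter (fun x => x ∈ Set.Ioc (0:ℝ) 1) with hR'
  have hmemR : ∀ x ∈ R.toFinset, x ∈ f.roots ∧ x ∈ Set.Ioc (0:ℝ) 1 := by
    intro x hx
    rwa [Multiset.mem_toFinset, hR, Multiset.mem_filter] at hx
  have hstep1 : R.toFinset.card ≤ (R'.toFinset \ R.toFinset).card + 1 := by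
    refine Finset.card_le_diff_of_interleaved fun x hx y hy hxy _ => ?_
    obtain ⟨hx1, hx2⟩ := hmemR x hx
    obtain ⟨hy1, hy2⟩ := hmemR y hy
    obtain ⟨z, hz, hz0⟩ := rolle_step f ρ hx2.1 hxy
      ((mem_roots hf).1 hx1) ((mem_roots hf).1 hy1)
    refine ⟨z, ?_, hz.1, hz.2⟩
    rw [Multiset.mem_toFinset, hR', Multiset.mem_filter, mem_roots h]
    exact ⟨hz0, hx2.1.trans hz.1, hz.2.le.trans hy2.2⟩
  have hcountR : ∀ x ∈ R.toFinset, R.count x = f.rootMultiplicity x := by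
    intro x hx
    rw [hR, Multiset.count_filter_of_pos (hmemR x hx).2, count_roots]
  have hcountR' : ∀ x ∈ R.toFinset, (Dop ρ f).rootMultiplicity x ≤ R'.count x := by
    intro x hx
    rw [hR', Multiset.count_filter_of_pos (hmemR x hx).2, count_roots]
  have hpos : ∀ x ∈ R.toFinset, 1 ≤ R.count x := fun x hx =>
    Multiset.count_pos.2 (Multiset.mem_toFinset.1 hx)
  calc Multiset.card R = ∑ x ∈ R.toFinset, R.count x :=
        (Multiset.toFinset_sum_count_eq _).symm
    _ = ∑ x ∈ R.toFinset, (R.count x - 1 + 1) :=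
        Finset.sum_congr rfl fun x hx => (Nat.sub_add_cancel (hpos x hx)).symm
    _ = (∑ x ∈ R.toFinset, (R.count x - 1)) + R.toFinset.card := by
        rw [Finset.sum_add_distrib, Finset.sum_const, smul_eq_mul, mul_one]
    _ ≤ (∑ x ∈ R.toFinset, R'.count x) + ((R'.toFinset \ R.toFinset).card + 1) := by
        refine add_le_add (Finset.sum_le_sum fun x hx => ?_) hstep1
        rw [hcountR x hx]
        exact (mult_le f ρ x h).trans (hcountR' x hx)
    _ ≤ (∑ x ∈ R.toFinset, R'.count x) +
          ((∑ x ∈ R'.toFinset \ R.toFinset, R'.count x) + 1) := by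
        refine Nat.add_le_add_left (Nat.add_le_add_right ?_ 1) _
        rw [Finset.card_eq_sum_ones]
        refine Finset.sum_le_sum fun x hx => ?_
        exact Multiset.count_pos.2 (Multiset.mem_toFinset.1 (Finset.mem_sdiff.1 hx).1)
    _ = (∑ x ∈ R.toFinset ∪ (R'.toFinset \ R.toFinset), R'.count x) + 1 := by
        rw [Finset.sum_union (Finset.disjoint_sdiff)]
        ring
    _ ≤ Multiset.card R' + 1 := Nat.add_le_add_right (sum_count_le _ _) 1

noncomputable def DopL (L : List ℝ) (f : ℝ[X]) : ℝ[X] := L.foldr Dop f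

@[simp] lemma DopL_nil (f : ℝ[X]) : DopL [] f = f := rfl
@[simp] lemma DopL_cons (ρ : ℝ) (L : List ℝ) (f : ℝ[X]) :
    DopL (ρ :: L) f = Dop ρ (DopL L f) := rfl

lemma DopL_eval_zero (L : List ℝ) (f : ℝ[X]) :
    (DopL L f).eval 0 = (L.map fun ρ => -ρ).prod * f.eval 0 := by
  induction L with
  | nil => simp
  | cons ρ L ih => simp [Dop_eval_zero, ih]; ring

lemma card_iter (L : List ℝ) (f : ℝ[X]) (hL : ∀ ρ ∈ L, ρ ≠ 0) (hf : f.eval 0 ≠ 0) :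
    (f.roots.filter fun x => x ∈ Set.Ioc (0:ℝ) 1).card ≤
    ((DopL L f).roots.filter fun x => x ∈ Set.Ioc (0:ℝ) 1).card + L.length := by
  induction L with
  | nil => simp
  | cons ρ L ih =>
    have hprod : (L.map fun ρ => -ρ).prod ≠ 0 := by
      refine List.prod_ne_zero fun hmem => ?_
      rw [List.mem_map] at hmem
      obtain ⟨x, hx, hx0⟩ := hmem
      exact hL x (List.mem_cons_of_mem _ hx) (by linarith [neg_eq_zero.1 hx0])
    have h0 : (DopL L f).eval 0 ≠ 0 := by
      rw [DopL_eval_zero]; exact mul_ne_zero hprod hf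
    have hD : Dop ρ (DopL L f) ≠ 0 := by
      intro hc
      have h2 := Dop_eval_zero ρ (DopL L f)
      rw [hc, eval_zero] at h2
      have hρ : -ρ ≠ 0 := neg_ne_zero.2 (hL ρ List.mem_cons_self)
      exact mul_ne_zero hρ h0 h2.symm
    calc (f.roots.filter fun x => x ∈ Set.Ioc (0:ℝ) 1).card
        ≤ ((DopL L f).roots.filter fun x => x ∈ Set.Ioc (0:ℝ) 1).card + L.length :=
          ih (fun x hx => hL x (List.mem_cons_of_mem _ hx)) 
      _ ≤ (((Dop ρ (DopL L f)).roots.filter fun x => x ∈ Set.Ioc (0:ℝ) 1).card + 1)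
            + L.length := by
          have := card_step (DopL L f) ρ hD
          omega
      _ = ((DopL (ρ :: L) f).roots.filter fun x => x ∈ Set.Ioc (0:ℝ) 1).card
            + (ρ :: L).length := by simp; ring

lemma Dop_C (ρ c : ℝ) : Dop ρ (C c) = C (((0:ℝ) - ρ) * c) := by
  rw [Dop, derivative_C, mul_zero, zero_sub, ← C_mul, ← C_neg]
  congr 1
  ring

lemma Dop_C_mul_X_pow (ρ c : ℝ) (k : ℕ) (hk : 1 ≤ k) :
    Dop ρ (C c * X ^ k) = C (c * ((k:ℝ) - ρ)) * X ^ k := by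
  have hX : (X:ℝ[X]) * X ^ (k - 1) = X ^ k := by
    rw [← pow_succ']
    congr 1
    omega
  rw [Dop, derivative_C_mul, derivative_X_pow]
  rw [show C c * (C (k:ℝ) * X ^ (k-1)) = C (c * k) * X^(k-1) by rw [C_mul]; ring]
  rw [show (X:ℝ[X]) * (C (c * k) * X^(k-1)) = C (c * k) * (X * X^(k-1)) by ring, hX]
  rw [C_mul, C_mul, C_sub]
  ring

lemma Dop_sum {ι : Type*} (ρ : ℝ) (s : Finset ι) (g : ι → ℝ[X]) :
    Dop ρ (∑ i ∈ s, g i) = ∑ i ∈ s, Dop ρ (g i) := by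
  classical
  induction s using Finset.induction_on with
  | empty => simp [Dop]
  | insert a s h ih =>
    simp only [Finset.sum_insert h, ih, Dop, derivative_add, derivative_sum, Finset.sum_sub_distrib,
      ← Finset.mul_sum]
    ring

lemma DopL_formula (n : ℕ) (ε : ℕ → ℝ) (L : List ℝ) :
    DopL L (1 + ∑ k ∈ Finset.Icc 1 n, C (ε k) * X ^ k) =
      C ((L.map fun ρ => (0:ℝ) - ρ).prod) +
      ∑ k ∈ Finset.Icc 1 n, C (ε k * (L.map fun ρ => ((k:ℕ):ℝ) - ρ).prod) * X ^ k := by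
  induction L with
  | nil => simp
  | cons ρ L ih =>
    have hadd : ∀ f g : ℝ[X], Dop ρ (f + g) = Dop ρ f + Dop ρ g := by
      intro f g; simp [Dop]; ring
    simp only [List.map_cons, List.prod_cons]
    rw [DopL_cons, ih, hadd, Dop_sum, Dop_C]
    congr 1
    exact Finset.sum_congr rfl fun k hk => by
      rw [Dop_C_mul_X_pow _ _ _ (Finset.mem_Icc.1 hk).1]
      congr 2
      ring


/-- If `q` is a real polynomial of degree `m` with all roots real, `q(0) = 1`, and
`∑_{k=1}^n |q(k)| < 1/A`, then `P_n(x) = 1 + ∑_{k=1}^n ε_k x^k` with `|ε_k| ≤ A`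
has at most `m` roots in `(0,1]`, counted with multiplicity. -/
theorem root_bound_via_q
    (A : ℝ) (hA : 0 < A) (n : ℕ) (ε : ℕ → ℝ)
    (hε : ∀ k, 1 ≤ k → k ≤ n → |ε k| ≤ A)
    (m : ℕ) (q : Polynomial ℝ)
    (hqdeg : q.natDegree = m)
    (hqreal : q.roots.card = m)
    (hq0 : q.eval 0 = 1)
    (hqsum : (∑ k ∈ Finset.Icc 1 n, |q.eval (k : ℝ)|) < 1 / A) :
    (((1 + ∑ k ∈ Finset.Icc 1 n, Polynomial.C (ε k) * Polynomial.X ^ k :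
        Polynomial ℝ)).roots.filter fun x => x ∈ Set.Ioc (0 : ℝ) 1).card ≤ m := by

  set P : ℝ[X] := 1 + ∑ k ∈ Finset.Icc 1 n, C (ε k) * X ^ k with hP
  set L : List ℝ := q.roots.toList with hLdef
  set γ : ℝ := q.leadingCoeff with hγdef
  have hqne : q ≠ 0 := fun h => by simp [h] at hq0
  have hγ : γ ≠ 0 := leadingCoeff_ne_zero.2 hqne
  have hLlen : L.length = m := by rw [hLdef, Multiset.length_toList, hqreal]
  have hL : ∀ ρ ∈ L, ρ ≠ 0 := by
    intro ρ hρ h0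
    have : ρ ∈ q.roots := by rwa [hLdef, Multiset.mem_toList] at hρ
    have : q.eval ρ = 0 := (mem_roots hqne).1 this
    rw [h0, hq0] at this
    norm_num at this
  have hP0 : P.eval 0 = 1 := by
    rw [hP, eval_add, eval_one, eval_finset_sum]
    rw [Finset.sum_eq_zero, add_zero]
    intro k hk
    have hk1 : 1 ≤ k := (Finset.mem_Icc.1 hk).1
    simp [zero_pow (by omega : k ≠ 0)]
  -- product identity
  have hlistprod : ∀ f : ℝ → ℝ, (L.map f).prod = (q.roots.map f).prod := by
    intro f
    rw [hLdef, ← Multiset.prod_coe (q.roots.toList.map f), ← Multiset.map_coe,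
      Multiset.coe_toList]
  have hq_eq : C γ * (q.roots.map fun a => X - C a).prod = q :=
    C_leadingCoeff_mul_prod_multiset_X_sub_C (by rw [hqdeg]; exact hqreal)
  have hqeval : ∀ t : ℝ, q.eval t = γ * (L.map fun ρ => t - ρ).prod := by
    intro t
    conv_lhs => rw [← hq_eq]
    rw [eval_mul, eval_C, eval_multiset_prod, Multiset.map_map, hlistprod]
    refine congrArg (γ * ·) (congrArg Multiset.prod (Multiset.map_congr rfl fun a _ => ?_))
    simp
  -- final polynomial has no roots in (0,1]
  have hFform := DopL_formula n ε L
  have hFne : ∀ x : ℝ, x ∈ Set.Ioc (0:ℝ) 1 → (DopL L P).eval x ≠ 0 := by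
    intro x hx hev
    rw [hP, hFform, eval_add, eval_C, eval_finset_sum] at hev
    simp only [eval_mul, eval_C, eval_pow, eval_X] at hev
    have hev' : γ * ((L.map fun ρ => (0:ℝ) - ρ).prod
        + ∑ k ∈ Finset.Icc 1 n, ε k * (L.map fun ρ => ((k:ℕ):ℝ) - ρ).prod * x ^ k) = 0 := by
      rw [hev, mul_zero]
    rw [mul_add, Finset.mul_sum] at hev'
    have hc0 : γ * (L.map fun ρ => (0:ℝ) - ρ).prod = 1 := by
      rw [← hqeval 0]; exact hq0
    have hck : ∀ k : ℕ, γ * (ε k * (L.map fun ρ => ((k:ℕ):ℝ) - ρ).prod * x ^ k)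
        = ε k * q.eval (k:ℝ) * x ^ k := by
      intro k
      rw [hqeval (k:ℝ)]
      ring
    rw [hc0] at hev'
    simp only [hck] at hev'
    have heq : (1:ℝ) = |∑ k ∈ Finset.Icc 1 n, ε k * q.eval (k:ℝ) * x ^ k| := by
      have : ∑ k ∈ Finset.Icc 1 n, ε k * q.eval (k:ℝ) * x ^ k = -1 := by linarith
      rw [this]; norm_num
    have hbound : |∑ k ∈ Finset.Icc 1 n, ε k * q.eval (k:ℝ) * x ^ k|
        ≤ A * ∑ k ∈ Finset.Icc 1 n, |q.eval (k:ℝ)| := by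
      refine (Finset.abs_sum_le_sum_abs _ _).trans ?_
      rw [Finset.mul_sum]
      refine Finset.sum_le_sum fun k hk => ?_
      obtain ⟨hk1, hk2⟩ := Finset.mem_Icc.1 hk
      rw [abs_mul, abs_mul]
      have hxk : |x ^ k| ≤ 1 := by
        rw [abs_pow]
        refine pow_le_one₀ (abs_nonneg x) ?_
        rw [abs_of_pos hx.1]; exact hx.2
      calc |ε k| * |q.eval (k:ℝ)| * |x ^ k| ≤ |ε k| * |q.eval (k:ℝ)| * 1 := by
            refine mul_le_mul_of_nonneg_left hxk (by positivity)
        _ = |ε k| * |q.eval (k:ℝ)| := mul_one _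
        _ ≤ A * |q.eval (k:ℝ)| :=
            mul_le_mul_of_nonneg_right (hε k hk1 hk2) (abs_nonneg _)
    have hlt : A * ∑ k ∈ Finset.Icc 1 n, |q.eval (k:ℝ)| < 1 := by
      have := (mul_lt_mul_of_pos_left hqsum hA)
      rwa [mul_one_div, div_self hA.ne'] at this
    linarith [heq ▸ hbound]
  have hzero : ((DopL L P).roots.filter fun x => x ∈ Set.Ioc (0:ℝ) 1) = 0 := by
    rw [Multiset.filter_eq_nil]
    intro x hx hxI
    exact hFne x hxI (mem_roots'.1 hx).2
  have := card_iter L P hL (by rw [hP0]; norm_num)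
  rw [hzero] at this
  simpa [hLlen] using this
end
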